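/- arXiv:1702.01744 — 4 statements merged into one kernel-verified Lean document; each statement's English description precedes it below -/
import Mathlib

section
/- For 2 ≤ k ≤ n−1, the number of forests of k−1 labeled plane trees on {1,…,n} with roots 1,…,k−1 in which vertex n is a descendant of vertex 1 equals (2n−k) times the number of such forests with k trees and roots 1,…,k in which n is a descendant of 1. -/
/-!
Write `R` for the vertex `k - 1` (label `k`), `N` for `n - 1` and `Z` for `0`. A forest with roots
`S = {0, …, k - 2}` in which `N` lies below `Z` is turned into a forest with roots `insert R S` in
which `N` still lies below `Z`, together with a corner `(v, i)`: a vertex and a position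
`i ≤ #children v`. If `N` is not below `R`, cut `R` off and record its slot. Otherwise let `N`,
with its subtree, take over the slot of `R`, and record the old slot of `N`, which lies in the
tree of `R`. Whether the corner lies in the tree of `R` tells which of the two cases to undo, so
this is a bijection; a forest with `n - k` non-roots has `n + (n - k) = 2n - k` corners.
-/

/-- `p` is the parent function of a rooted forest on `Fin n` whose roots are
exactly the vertices `0, …, k-1` (representing labels `1, …, k`). -/
def IsRootedForest (n k : ℕ) (p : Fin n → Fin n) : Prop :=
  (∀ v, p v = v ↔ v.val < k) ∧ ∀ v, ∃ m, ((p^[m]) v).val < k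

/-- `rk` records, for every non-root vertex, its position among its siblings:
it maps the children of each vertex `x` bijectively onto `{0, …, (#children of x) - 1}`,
so that the children of every vertex are linearly ordered.  Roots (which are children
of nobody) are normalized to have rank `0`. -/
def IsPlaneOrder (n : ℕ) (p : Fin n → Fin n) (rk : Fin n → ℕ) : Prop :=
  (∀ x : Fin n, Set.BijOn rk {v | p v = x ∧ v ≠ x}
      (Set.Iio ({v : Fin n | p v = x ∧ v ≠ x}.ncard))) ∧
  ∀ v, p v = v → rk v = 0

open Function Set

section Forest

variable {α : Type*} {p q : α → α} {S : Set α} {x y z r v : α}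

def Reaches (p : α → α) (x y : α) : Prop := ∃ m, p^[m] x = y

theorem Reaches.refl (p : α → α) (x : α) : Reaches p x x := ⟨0, rfl⟩

theorem reaches_apply (p : α → α) (x : α) : Reaches p x (p x) := ⟨1, rfl⟩

theorem Reaches.trans (hxy : Reaches p x y) (hyz : Reaches p y z) : Reaches p x z := by
  obtain ⟨a, rfl⟩ := hxy
  obtain ⟨b, rfl⟩ := hyz
  exact ⟨b + a, iterate_add_apply p b a x⟩

theorem Reaches.of_apply (h : Reaches p (p x) y) : Reaches p x y := (reaches_apply p x).trans h

theorem Reaches.apply_of_ne (h : Reaches p x y) (hxy : x ≠ y) : Reaches p (p x) y := by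
  obtain ⟨_ | m, rfl⟩ := h
  · exact absurd rfl hxy
  · exact ⟨m, (iterate_succ_apply p m x).symm⟩

theorem Reaches.eq_of_apply_eq_self (h : Reaches p x y) (hx : p x = x) : x = y := by
  obtain ⟨m, rfl⟩ := h
  exact (iterate_fixed hx m).symm

/-- The ancestors of a vertex form a chain, and a fixed point ends it. -/
theorem Reaches.reaches_of_reaches_fixed (hxy : Reaches p x y) (hxr : Reaches p x r)
    (hr : p r = r) : Reaches p y r := by
  obtain ⟨a, rfl⟩ := hxy
  obtain ⟨b, rfl⟩ := hxr
  rcases le_total a b with hab | hba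
  · exact ⟨b - a, by rw [← iterate_add_apply, Nat.sub_add_cancel hab]⟩
  · refine ⟨0, ?_⟩
    rw [iterate_zero_apply, ← Nat.sub_add_cancel hba, iterate_add_apply, iterate_fixed hr]

theorem Reaches.fixed_unique (hxr : Reaches p x r) (hxr' : Reaches p x z) (hr : p r = r)
    (hz : p z = z) : r = z :=
  (hxr.reaches_of_reaches_fixed hxr' hz).eq_of_apply_eq_self hr

section Update

variable [DecidableEq α]

theorem iterate_update_of_not_reaches (h : ¬ Reaches p x z) (w : α) (m : ℕ) :
    (update p z w)^[m] x = p^[m] x := by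
  induction m with
  | zero => rfl
  | succ m ih =>
    rw [iterate_succ_apply', iterate_succ_apply', ih, update_of_ne fun e => h ⟨m, e⟩]

theorem reaches_update_iff (h : ¬ Reaches p x z) (w : α) :
    Reaches (update p z w) x y ↔ Reaches p x y := by
  simp only [Reaches, iterate_update_of_not_reaches h]

theorem Reaches.update_target (h : Reaches p x z) (w : α) : Reaches (update p z w) x z := by
  obtain ⟨m, hm⟩ := h
  induction m generalizing x with
  | zero => exact ⟨0, hm⟩
  | succ m ih =>
    by_cases hxz : x = z
    · exact hxz ▸ Reaches.refl _ x
    · refine Reaches.of_apply ?_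
      rw [update_of_ne hxz]
      exact ih (by rwa [iterate_succ_apply] at hm)

end Update

def IsForestWithRoots (p : α → α) (S : Set α) : Prop :=
  (∀ v, p v = v ↔ v ∈ S) ∧ ∀ v, ∃ m, p^[m] v ∈ S

namespace IsForestWithRoots

theorem not_reaches_of_reaches (hF : IsForestWithRoots p S) (hxz : Reaches p x z)
    (hz : z ∈ S) (hr : r ∈ S) (hzr : z ≠ r) : ¬ Reaches p x r := fun hxr =>
  hzr (hxz.fixed_unique hxr ((hF.1 z).2 hz) ((hF.1 r).2 hr))

/-- A vertex that is its own proper ancestor is periodic, so it equals the root it reaches. -/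
theorem reaches_antisymm (hF : IsForestWithRoots p S) (hxy : Reaches p x y)
    (hyx : Reaches p y x) : x = y := by
  obtain ⟨a, rfl⟩ := hxy
  obtain ⟨b, hb⟩ := hyx
  obtain ⟨c, hc⟩ := hF.2 x
  rcases Nat.eq_zero_or_pos (b + a) with h | h
  · rw [show a = 0 by omega, iterate_zero_apply]
  have hper : IsPeriodicPt p ((b + a) * c) x :=
    IsPeriodicPt.mul_const (by rw [IsPeriodicPt, IsFixedPt, iterate_add_apply, hb]) c
  have hroot : x = p^[c] x := calc
    x = p^[(b + a) * c - c] (p^[c] x) := by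
      rw [← iterate_add_apply, Nat.sub_add_cancel (Nat.le_mul_of_pos_left c h), hper.eq]
    _ = p^[c] x := iterate_fixed ((hF.1 _).2 hc) _
  exact (iterate_fixed ((hF.1 x).2 (hroot ▸ hc)) a).symm

theorem not_reaches_of_apply (hF : IsForestWithRoots p S) (hx : x ∉ S) :
    ¬ Reaches p (p x) x := fun h =>
  hx ((hF.1 x).1 (hF.reaches_antisymm (reaches_apply p x) h).symm)

theorem setOf_ne_eq_compl (hF : IsForestWithRoots p S) : {v | p v ≠ v} = Sᶜ := by
  ext v
  simp [hF.1 v]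

end IsForestWithRoots

theorem exists_iterate_mem_of_eq_off (hre : ∀ v, ∃ m, p^[m] v ∈ S) {S' : Set α}
    (hpq : ∀ y, y ≠ x → q y = p y) (hS : ∀ y ∈ S, y ≠ x → ∃ m, q^[m] y ∈ S')
    (hx : ∃ m, q^[m] x ∈ S') (v : α) : ∃ m, q^[m] v ∈ S' := by
  obtain ⟨m, hm⟩ := hre v
  induction m generalizing v with
  | zero =>
    by_cases hvx : v = x
    · exact hvx ▸ hx
    · exact hS v hm hvx
  | succ m ih =>
    by_cases hvx : v = x
    · exact hvx ▸ hx
    · obtain ⟨k, hk⟩ := ih (p v) (by rwa [iterate_succ_apply] at hm)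
      exact ⟨k + 1, by rwa [iterate_succ_apply, hpq v hvx]⟩

variable [DecidableEq α]

theorem IsForestWithRoots.update_self_insert (hF : IsForestWithRoots p S) (x : α) :
    IsForestWithRoots (update p x x) (insert x S) := by
  refine ⟨fun y => ?_, exists_iterate_mem_of_eq_off hF.2 (fun y hy => update_of_ne hy _ _)
    (fun y hy _ => ⟨0, mem_insert_of_mem x hy⟩) ⟨0, mem_insert x S⟩⟩
  by_cases hyx : y = x
  · simp [hyx]
  · simp [hyx, hF.1 y]

theorem IsForestWithRoots.update_sdiff (hF : IsForestWithRoots p S)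
    (hv : ¬ Reaches p v x) : IsForestWithRoots (update p x v) (S \ {x}) := by
  have hvx : v ≠ x := fun h => hv (h ▸ Reaches.refl p v)
  refine ⟨fun y => ?_, exists_iterate_mem_of_eq_off hF.2 (fun y hy => update_of_ne hy _ _)
    (fun y hy hyx => ⟨0, hy, hyx⟩) ?_⟩
  · by_cases hyx : y = x
    · simp [hyx, hvx]
    · simp [hyx, hF.1 y]
  · obtain ⟨m, hm⟩ := hF.2 v
    refine ⟨m + 1, ?_⟩
    rw [iterate_succ_apply, Function.update_self, iterate_update_of_not_reaches hv]
    exact ⟨hm, fun h => hv ⟨m, h⟩⟩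

end Forest

section BijOnShift

variable {α : Type*} {f g : α → ℕ} {C : Set α} {x : α} {i m : ℕ}

theorem bijOn_insert_of_shift (hbij : BijOn f C (Iio m)) (hx : x ∉ C) (hi : i ≤ m)
    (hgx : g x = i) (hg : ∀ y ∈ C, g y = if i ≤ f y then f y + 1 else f y) :
    BijOn g (insert x C) (Iio (m + 1)) := by
  refine ⟨?_, ?_, fun j hj => ?_⟩
  · rintro y (rfl | hy)
    · simp only [mem_Iio, hgx]; omega
    · have := hbij.mapsTo hy
      simp only [mem_Iio, hg y hy] at this ⊢
      split <;> omega
  · rintro y (rfl | hy) z (rfl | hz) hyz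
    · rfl
    · have := hbij.mapsTo hz
      rw [hgx, hg z hz] at hyz
      split at hyz <;> omega
    · have := hbij.mapsTo hy
      rw [hgx, hg y hy] at hyz
      split at hyz <;> omega
    · rw [hg y hy, hg z hz] at hyz
      exact hbij.injOn hy hz (by split at hyz <;> split at hyz <;> omega)
  · simp only [mem_Iio] at hj
    rcases lt_trichotomy j i with h | rfl | h
    · obtain ⟨y, hy, rfl⟩ := hbij.surjOn (show j ∈ Iio m by simp; omega)
      exact ⟨y, mem_insert_of_mem _ hy, by rw [hg y hy]; split <;> omega⟩
    · exact ⟨x, mem_insert _ _, hgx⟩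
    · obtain ⟨y, hy, hfy⟩ := hbij.surjOn (show j - 1 ∈ Iio m by simp; omega)
      exact ⟨y, mem_insert_of_mem _ hy, by rw [hg y hy, hfy]; split <;> omega⟩

theorem bijOn_diff_singleton_of_shift (hbij : BijOn f C (Iio m)) (hx : x ∈ C)
    (hg : ∀ y ∈ C \ {x}, g y = if f x < f y then f y - 1 else f y) :
    BijOn g (C \ {x}) (Iio (m - 1)) := by
  have hfx : f x < m := hbij.mapsTo hx
  have hne : ∀ y ∈ C \ {x}, f y ≠ f x := fun y hy h => hy.2 (hbij.injOn hy.1 hx h)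
  refine ⟨fun y hy => ?_, fun y hy z hz hyz => ?_, fun j hj => ?_⟩
  · have hfy : f y < m := hbij.mapsTo hy.1
    have := hne y hy
    simp only [mem_Iio, hg y hy]
    split <;> omega
  · have := hne y hy
    have := hne z hz
    rw [hg y hy, hg z hz] at hyz
    exact hbij.injOn hy.1 hz.1 (by split at hyz <;> split at hyz <;> omega)
  · simp only [mem_Iio] at hj
    obtain ⟨y, hy, hfy⟩ := hbij.surjOn
      (show (if j < f x then j else j + 1) ∈ Iio m by simp only [mem_Iio]; split <;> omega)
    have hyx : y ≠ x := by rintro rfl; split at hfy <;> omega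
    exact ⟨y, ⟨hy, hyx⟩, by rw [hg y ⟨hy, hyx⟩, hfy]; split <;> split <;> omega⟩

end BijOnShift

section PlaneData

variable {α : Type*} {F : (α → α) × (α → ℕ)} {p : α → α} {x v w : α} {c : α × ℕ}

def children (p : α → α) (x : α) : Set α := {v | p v = x ∧ v ≠ x}

theorem mem_children_apply (hx : p x ≠ x) : x ∈ children p (p x) := ⟨rfl, Ne.symm hx⟩

theorem notMem_children_of_ne (h : p x ≠ w) : x ∉ children p w := fun hx => h hx.1

theorem notMem_children_of_fixed (h : p x = x) : x ∉ children p w := fun hx =>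
  hx.2 (h.symm.trans hx.1)

/-- A place to hang a new child: below `c.1`, in position `c.2`. -/
def Corner (p : α → α) : Type _ := {c : α × ℕ // c.2 ≤ (children p c.1).ncard}

def slot (F : (α → α) × (α → ℕ)) (x : α) : α × ℕ := (F.1 x, F.2 x)

@[simp] theorem slot_fst : (slot F x).1 = F.1 x := rfl

@[simp] theorem slot_snd : (slot F x).2 = F.2 x := rfl

variable [DecidableEq α]

theorem children_update_self : children (update p x x) w = children p w \ {x} := by
  ext y
  by_cases hyx : y = x <;> simp [children, hyx]

theorem children_update_of_ne (hw : w ≠ v) : children (update p x v) w = children p w \ {x} := by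
  ext y
  by_cases hyx : y = x
  · simp [children, hyx, Ne.symm hw]
  · simp [children, hyx]

theorem children_update_target (hv : v ≠ x) :
    children (update p x v) v = insert x (children p v \ {x}) := by
  ext y
  by_cases hyx : y = x
  · simp [children, hyx, Ne.symm hv]
  · simp [children, hyx]

/-- Cut `x` from its parent, so that its subtree becomes a tree of its own; the younger
siblings of `x` move one place to the left. -/
def detach (x : α) (F : (α → α) × (α → ℕ)) : (α → α) × (α → ℕ) :=
  (update F.1 x x, update (fun y =>
    if F.1 y = F.1 x ∧ y ≠ F.1 x ∧ F.2 x < F.2 y then F.2 y - 1 else F.2 y) x 0)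

/-- Hang `x` below `c.1` as its child number `c.2`; the children from position `c.2` on
move one place to the right. -/
def attach (x : α) (c : α × ℕ) (F : (α → α) × (α → ℕ)) : (α → α) × (α → ℕ) :=
  (update F.1 x c.1, update (fun y =>
    if F.1 y = c.1 ∧ y ≠ c.1 ∧ c.2 ≤ F.2 y then F.2 y + 1 else F.2 y) x c.2)

@[simp] theorem detach_fst : (detach x F).1 = update F.1 x x := rfl

@[simp] theorem attach_fst : (attach x c F).1 = update F.1 x c.1 := rfl

@[simp] theorem detach_snd_self : (detach x F).2 x = 0 := by simp [detach]

theorem detach_snd_of_fixed (hw : F.1 w = w) (hwx : w ≠ x) : (detach x F).2 w = F.2 w := by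
  simp only [detach, update_of_ne hwx, hw]
  split_ifs with h
  · exact absurd h.1 h.2.1
  · rfl

theorem attach_snd_of_fixed (hw : F.1 w = w) (hwx : w ≠ x) : (attach x c F).2 w = F.2 w := by
  simp only [attach, update_of_ne hwx, hw]
  split_ifs with h
  · exact absurd h.1 h.2.1
  · rfl

@[simp] theorem slot_attach : slot (attach x c F) x = c := by simp [slot, attach]

theorem detach_attach (hx : F.1 x = x) (h0 : F.2 x = 0) (c : α × ℕ) :
    detach x (attach x c F) = F := by
  refine Prod.ext ?_ (funext fun y => ?_)
  · rw [detach_fst, attach_fst, update_idem, update_eq_self_iff, hx]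
  by_cases hyx : y = x
  · simp [detach, hyx, h0]
  · simp only [detach, attach, update_of_ne hyx, Function.update_self]
    split_ifs <;> grind

theorem attach_slot_detach (hx : F.1 x ≠ x) (hinj : InjOn F.2 (children F.1 (F.1 x))) :
    attach x (slot F x) (detach x F) = F := by
  refine Prod.ext (by simp [slot]) (funext fun y => ?_)
  by_cases hyx : y = x
  · simp [attach, slot, hyx]
  · have hsib : F.1 y = F.1 x → y ≠ F.1 x → F.2 y ≠ F.2 x := fun h1 h2 h3 =>
      hyx (hinj ⟨h1, h2⟩ ⟨rfl, hx.symm⟩ h3)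
    simp only [attach, detach, slot, update_of_ne hyx]
    split_ifs <;> grind

/-- `x` takes over the slot of `y` together with its own subtree, and `y` becomes a root. -/
def transplant (x y : α) (F : (α → α) × (α → ℕ)) : (α → α) × (α → ℕ) :=
  attach x (slot (detach x F) y) (detach y (detach x F))

theorem transplant_fst (hxy : x ≠ y) :
    (transplant x y F).1 = update (update (update F.1 x x) y y) x (F.1 y) := by
  simp [transplant, slot, update_of_ne (Ne.symm hxy)]

/-- `y` takes over the slot of `x`, and `x` moves with its subtree to the corner `c`. -/
def relocate (x y : α) (c : α × ℕ) (F : (α → α) × (α → ℕ)) : (α → α) × (α → ℕ) :=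
  attach x c (attach y (slot F x) (detach x F))

theorem relocate_fst :
    (relocate x y c F).1 = update (update (update F.1 x x) y (F.1 x)) x c.1 := by
  simp [relocate, slot]

open Classical in
noncomputable def cut (R N : α) (F : (α → α) × (α → ℕ)) : ((α → α) × (α → ℕ)) × (α × ℕ) :=
  if Reaches F.1 N R then (transplant N R F, slot F N) else (detach R F, slot F R)

open Classical in
noncomputable def graft (R N : α) (G : (α → α) × (α → ℕ)) (c : α × ℕ) : (α → α) × (α → ℕ) :=
  if Reaches G.1 c.1 R then relocate N R c G else attach R c G

end PlaneData

section PlaneOrder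

variable {n : ℕ} {F : (Fin n → Fin n) × (Fin n → ℕ)} {p : Fin n → Fin n} {rk : Fin n → ℕ}
  {x y : Fin n} {c : Fin n × ℕ}

theorem IsPlaneOrder.bijOn (h : IsPlaneOrder n p rk) (x : Fin n) :
    BijOn rk (children p x) (Iio (children p x).ncard) :=
  h.1 x

theorem IsPlaneOrder.lt_ncard (h : IsPlaneOrder n p rk) (hy : y ∈ children p x) :
    rk y < (children p x).ncard :=
  (h.bijOn x).mapsTo hy

theorem IsPlaneOrder.detach (h : IsPlaneOrder n F.1 F.2) (hx : F.1 x ≠ x) :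
    IsPlaneOrder n (detach x F).1 (detach x F).2 := by
  have hmem := mem_children_apply hx
  refine ⟨fun w => ?_, fun y hy => ?_⟩
  · change BijOn _ (children _ w) (Iio (children _ w).ncard)
    rw [detach_fst, children_update_self]
    by_cases hw : w = F.1 x
    · subst hw
      rw [ncard_sdiff_singleton_of_mem hmem]
      refine bijOn_diff_singleton_of_shift (h.bijOn _) hmem fun y hy => ?_
      have hyx : y ≠ x := hy.2
      simp [_root_.detach, hyx, hy.1.1, hy.1.2]
    · rw [sdiff_singleton_eq_self (notMem_children_of_ne (Ne.symm hw))]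
      refine (h.bijOn w).congr fun y hy => ?_
      have hyx : y ≠ x := by rintro rfl; exact hw hy.1.symm
      simp [_root_.detach, hyx, hy.1, hw]
  · by_cases hyx : y = x
    · simp [_root_.detach, hyx]
    · have hy' : F.1 y = y := by simpa [hyx] using hy
      simp [_root_.detach, hyx, hy', h.2 y hy']

theorem IsPlaneOrder.attach (h : IsPlaneOrder n F.1 F.2) (hx : F.1 x = x) (hcx : c.1 ≠ x)
    (hc : c.2 ≤ (children F.1 c.1).ncard) :
    IsPlaneOrder n (attach x c F).1 (attach x c F).2 := by
  have hnot : ∀ w, x ∉ children F.1 w := fun w => notMem_children_of_fixed hx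
  refine ⟨fun w => ?_, fun y hy => ?_⟩
  · change BijOn _ (children _ w) (Iio (children _ w).ncard)
    rw [attach_fst]
    by_cases hw : w = c.1
    · subst hw
      rw [children_update_target hcx, sdiff_singleton_eq_self (hnot _),
        ncard_insert_of_notMem (hnot _)]
      refine bijOn_insert_of_shift (h.bijOn _) (hnot _) hc (by simp [_root_.attach])
        fun y hy => ?_
      have hyx : y ≠ x := by rintro rfl; exact hnot _ hy
      simp [_root_.attach, hyx, hy.1, hy.2]
    · rw [children_update_of_ne hw, sdiff_singleton_eq_self (hnot _)]
      refine (h.bijOn w).congr fun y hy => ?_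
      have hyx : y ≠ x := by rintro rfl; exact hnot _ hy
      simp [_root_.attach, hyx, hy.1, hw]
  · have hyx : y ≠ x := by rintro rfl; exact hcx (by simpa using hy)
    have hy' : F.1 y = y := by simpa [hyx] using hy
    simp only [_root_.attach, update_of_ne hyx, hy', h.2 y hy']
    split_ifs with hcy
    · exact absurd hcy.1 hcy.2.1
    · rfl

theorem IsPlaneOrder.le_ncard_children_detach (h : IsPlaneOrder n F.1 F.2) (hx : F.1 x ≠ x) :
    F.2 x ≤ (children (_root_.detach x F).1 (F.1 x)).ncard := by
  have hmem := mem_children_apply hx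
  rw [detach_fst, children_update_self, ncard_sdiff_singleton_of_mem hmem]
  have := h.lt_ncard hmem
  omega

theorem IsPlaneOrder.transplant (h : IsPlaneOrder n F.1 F.2) (hxy : x ≠ y) (hx : F.1 x ≠ x)
    (hy : F.1 y ≠ y) (hyx : F.1 y ≠ x) :
    IsPlaneOrder n (transplant x y F).1 (transplant x y F).2 := by
  have h₁ := h.detach hx
  have hy₁ : (_root_.detach x F).1 y ≠ y := by simpa [Ne.symm hxy] using hy
  exact (h₁.detach hy₁).attach (by simp [hxy]) (by simpa [Ne.symm hxy] using hyx)
    (h₁.le_ncard_children_detach hy₁)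

theorem IsPlaneOrder.le_ncard_children_transplant (h : IsPlaneOrder n F.1 F.2) (hxy : x ≠ y)
    (hx : F.1 x ≠ x) (hxy' : F.1 x ≠ F.1 y) :
    F.2 x ≤ (children (_root_.transplant x y F).1 (F.1 x)).ncard := by
  rw [transplant_fst hxy, children_update_of_ne hxy', children_update_self,
    sdiff_singleton_eq_self (notMem_children_of_ne (by simpa [Ne.symm hxy] using hxy'.symm)),
    sdiff_singleton_eq_self (notMem_children_of_fixed (by simp))]
  exact h.le_ncard_children_detach hx

theorem IsPlaneOrder.relocate (h : IsPlaneOrder n F.1 F.2) (hxy : x ≠ y) (hx : F.1 x ≠ x)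
    (hy : F.1 y = y) (hxy' : F.1 x ≠ y) (hcx : c.1 ≠ x) (hcx' : c.1 ≠ F.1 x)
    (hc : c.2 ≤ (children F.1 c.1).ncard) :
    IsPlaneOrder n (relocate x y c F).1 (relocate x y c F).2 := by
  have h₁ := (h.detach hx).attach (x := y) (c := slot F x) (by simpa [Ne.symm hxy] using hy)
    hxy' (h.le_ncard_children_detach hx)
  have hch :
      children (_root_.attach y (slot F x) (_root_.detach x F)).1 c.1 = children F.1 c.1 := by
    rw [attach_fst, detach_fst, slot_fst, children_update_of_ne hcx', children_update_self,
      sdiff_singleton_eq_self (notMem_children_of_ne (Ne.symm hcx')),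
      sdiff_singleton_eq_self (notMem_children_of_fixed (by simpa [Ne.symm hxy] using hy))]
  exact h₁.attach (by simp [hxy]) hcx (hch ▸ hc)

end PlaneOrder

section Surgery

variable {α : Type*} [DecidableEq α] {F : (α → α) × (α → ℕ)} {S : Set α} {x y z : α}
  {c : α × ℕ}

theorem IsForestWithRoots.transplant (hF : IsForestWithRoots F.1 S) (hx : x ∉ S) (hy : y ∉ S)
    (hz : z ∈ S) (hxy : x ≠ y) (hxy' : Reaches F.1 x y) (hxz : Reaches F.1 x z) :
    IsForestWithRoots (transplant x y F).1 (insert y S) ∧ Reaches (transplant x y F).1 x z ∧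
      Reaches (transplant x y F).1 (F.1 x) y := by
  set p := F.1
  have hpy_y : ¬ Reaches p (p y) y := hF.not_reaches_of_apply hy
  have hpy_x : ¬ Reaches p (p y) x := fun h => hpy_y (h.trans hxy')
  have hpx_x : ¬ Reaches p (p x) x := hF.not_reaches_of_apply hx
  set p₂ := update (update p x x) y y
  -- the path from `p y` up to `z` avoids both `x` and `y`, so the surgery leaves it intact
  have hp₂_py : ∀ w, Reaches p₂ (p y) w ↔ Reaches p (p y) w := fun w => by
    rw [reaches_update_iff ((reaches_update_iff hpy_x x).not.2 hpy_y), reaches_update_iff hpy_x]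
  have hp₂_px : Reaches p₂ (p x) y :=
    ((reaches_update_iff hpx_x x).2 (hxy'.apply_of_ne hxy)).update_target y
  have hp₂_px_x : ¬ Reaches p₂ (p x) x := fun h =>
    hxy (h.fixed_unique hp₂_px (by simp [p₂, hxy]) (by simp [p₂]))
  have hp₂_py_x : ¬ Reaches p₂ (p y) x := (hp₂_py x).not.2 hpy_x
  have hroots : insert y (insert x S) \ {x} = insert y S := by
    ext w; by_cases hw : w = x <;> simp [hw, hx, hxy]
  rw [transplant_fst hxy]
  refine ⟨hroots ▸ ((hF.update_self_insert x).update_self_insert y).update_sdiff hp₂_py_x,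
    Reaches.of_apply ?_, (reaches_update_iff hp₂_px_x _).2 hp₂_px⟩
  rw [Function.update_self, reaches_update_iff hp₂_py_x, hp₂_py]
  exact (hxy'.reaches_of_reaches_fixed hxz ((hF.1 z).2 hz)).apply_of_ne fun h => hy (h ▸ hz)

theorem IsForestWithRoots.relocate (hF : IsForestWithRoots F.1 (insert y S)) (hx : x ∉ S)
    (hy : y ∉ S) (hz : z ∈ S) (hxy : x ≠ y) (hxz : Reaches F.1 x z) (hcy : Reaches F.1 c.1 y) :
    IsForestWithRoots (relocate x y c F).1 S ∧ Reaches (relocate x y c F).1 x z ∧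
      Reaches (relocate x y c F).1 x y := by
  set g := F.1
  have hzy : z ≠ y := fun h => hy (h ▸ hz)
  have hxz' : x ≠ z := fun h => hx (h ▸ hz)
  have hz' : z ∈ insert y S := mem_insert_of_mem y hz
  have hx_y : ¬ Reaches g x y := hF.not_reaches_of_reaches hxz hz' (mem_insert y S) hzy
  have hgx_x : ¬ Reaches g (g x) x := hF.not_reaches_of_apply (by simp [hx, hxy])
  have hgx_y : ¬ Reaches g (g x) y := fun h => hx_y h.of_apply
  have hc_x : ¬ Reaches g c.1 x := fun h =>
    hF.not_reaches_of_reaches (h.trans hxz) hz' (mem_insert y S) hzy hcy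
  set h₁ := update g x x
  set h₂ := update h₁ y (g x)
  have hh₁_gx_y : ¬ Reaches h₁ (g x) y := (reaches_update_iff hgx_x x).not.2 hgx_y
  have hh₂_gx_z : Reaches h₂ (g x) z :=
    (reaches_update_iff hh₁_gx_y _).2 ((reaches_update_iff hgx_x x).2 (hxz.apply_of_ne hxz'))
  have hh₂_cy : Reaches h₂ c.1 y := ((reaches_update_iff hc_x x).2 hcy).update_target (g x)
  -- in `h₂` the path from `c.1` runs up to `y` and then on through the new edge `y ↦ g x`
  have hh₂_cz : Reaches h₂ c.1 z :=
    hh₂_cy.trans (Reaches.of_apply (by simpa [h₂] using hh₂_gx_z))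
  have hh₂_cx : ¬ Reaches h₂ c.1 x := fun h => hxz' (h.fixed_unique hh₂_cz
    (by simp [h₂, h₁, hxy]) (by simp [h₂, h₁, hzy, hxz'.symm, (hF.1 z).2 hz']))
  have hroots : (insert x (insert y S) \ {y}) \ {x} = S := by
    ext w; by_cases hw : w = x <;> by_cases hw' : w = y <;> simp [hw, hw', hx, hy, hxy]
  rw [relocate_fst]
  refine ⟨hroots ▸ ((hF.update_self_insert x).update_sdiff hh₁_gx_y).update_sdiff hh₂_cx,
    ?_, ?_⟩ <;> exact Reaches.of_apply (by rwa [Function.update_self, reaches_update_iff hh₂_cx])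

end Surgery

section Counting

variable {α : Type*}

theorem card_sigma_of_forall_card_eq {β : α → Type*} [∀ a, Finite (β a)] {m : ℕ}
    (h : ∀ a, Nat.card (β a) = m) : Nat.card (Σ a, β a) = Nat.card α * m := by
  rw [Nat.card_congr ((Equiv.sigmaCongrRight fun a => Finite.equivFinOfCardEq (h a)).trans
    (Equiv.sigmaEquivProd _ _)), Nat.card_prod, Nat.card_fin]

variable [Fintype α] [DecidableEq α]

theorem sum_ncard_children (p : α → α) : ∑ v, (children p v).ncard = {v | p v ≠ v}.ncard := by
  have hfib (v : α) : children p v = ↑{y ∈ Finset.univ.filter (fun y => p y ≠ y) | p y = v} := by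
    ext y
    simp only [children, mem_ofPred_eq, Finset.coe_filter, Finset.mem_filter, Finset.mem_univ,
      true_and, and_comm (a := p y = v)]
    exact and_congr_left fun h => h ▸ ne_comm
  simp only [hfib, ncard_coe_finset,
    ← Finset.card_eq_sum_card_fiberwise (fun y _ => Finset.mem_univ (p y))]
  simp [ncard_eq_toFinset_card']

instance (p : α → α) : Finite (Corner p) :=
  Finite.of_equiv _ (Equiv.subtypeProdEquivSigmaSubtype fun v i => i ≤ (children p v).ncard).symm

theorem card_corner (p : α → α) :
    Nat.card (Corner p) = Fintype.card α + {v | p v ≠ v}.ncard := by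
  have hfib (v : α) : Nat.card {i : ℕ // i ≤ (children p v).ncard} = (children p v).ncard + 1 :=
    by change Nat.card (Iic _) = _; simp
  rw [Corner, Nat.card_congr (Equiv.subtypeProdEquivSigmaSubtype fun v i =>
    i ≤ (children p v).ncard), Nat.card_sigma]
  simp only [hfib, Finset.sum_add_distrib, sum_ncard_children, Finset.sum_const,
    Finset.card_univ, smul_eq_mul, mul_one]
  omega

end Counting

section Bijection

variable {n : ℕ} {S : Set (Fin n)} {R N Z : Fin n} {F G : (Fin n → Fin n) × (Fin n → ℕ)}
  {c : Fin n × ℕ}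

def IsPlaneForest (S : Set (Fin n)) (N Z : Fin n) (F : (Fin n → Fin n) × (Fin n → ℕ)) : Prop :=
  IsForestWithRoots F.1 S ∧ IsPlaneOrder n F.1 F.2 ∧ Reaches F.1 N Z

-- In this lemma and the next three, the `Reaches` conjunct is what tells `cut` and `graft`
-- which of the two cases they have to undo.
theorem IsPlaneForest.detach (hF : IsPlaneForest S N Z F) (hR : R ∉ S)
    (hNR : ¬ Reaches F.1 N R) :
    IsPlaneForest (insert R S) N Z (detach R F) ∧ ¬ Reaches (detach R F).1 (F.1 R) R := by
  obtain ⟨hfor, hpo, hNZ⟩ := hF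
  have hRR : ¬ Reaches F.1 (F.1 R) R := hfor.not_reaches_of_apply hR
  rw [detach_fst, reaches_update_iff hRR]
  exact ⟨⟨hfor.update_self_insert R, hpo.detach fun h => hR ((hfor.1 R).1 h),
    (reaches_update_iff hNR R).2 hNZ⟩, hRR⟩

theorem IsPlaneForest.attach (hG : IsPlaneForest (insert R S) N Z G) (hR : R ∉ S) (hZ : Z ∈ S)
    (hc : c.2 ≤ (children G.1 c.1).ncard) (hcR : ¬ Reaches G.1 c.1 R) :
    IsPlaneForest S N Z (attach R c G) ∧ ¬ Reaches (attach R c G).1 N R := by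
  obtain ⟨hfor, hpo, hNZ⟩ := hG
  have hNR : ¬ Reaches G.1 N R := hfor.not_reaches_of_reaches hNZ (mem_insert_of_mem R hZ)
    (mem_insert R S) fun h => hR (h ▸ hZ)
  rw [attach_fst, reaches_update_iff hNR]
  refine ⟨⟨insert_sdiff_self_of_notMem hR ▸ hfor.update_sdiff hcR,
    hpo.attach ((hfor.1 R).2 (mem_insert R S)) (fun h => hcR (h ▸ Reaches.refl _ _)) hc,
    (reaches_update_iff hNR c.1).2 hNZ⟩, hNR⟩

theorem IsPlaneForest.transplant (hF : IsPlaneForest S N Z F) (hR : R ∉ S) (hN : N ∉ S)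
    (hZ : Z ∈ S) (hNR : N ≠ R) (hB : Reaches F.1 N R) :
    IsPlaneForest (insert R S) N Z (transplant N R F) ∧
      Reaches (transplant N R F).1 (F.1 N) R ∧
      F.2 N ≤ (children (transplant N R F).1 (F.1 N)).ncard := by
  obtain ⟨hfor, hpo, hNZ⟩ := hF
  obtain ⟨hfor', hNZ', hsel⟩ := hfor.transplant hN hR hZ hNR hB hNZ
  have hRR : ¬ Reaches F.1 (F.1 R) R := hfor.not_reaches_of_apply hR
  have hNN : F.1 N ≠ N := fun h => hN ((hfor.1 N).1 h)
  refine ⟨⟨hfor', hpo.transplant hNR hNN ?_ ?_, hNZ'⟩, hsel,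
    hpo.le_ncard_children_transplant hNR hNN ?_⟩
  · exact fun h => hRR (by rw [h]; exact Reaches.refl _ _)
  · exact fun h => hRR (by rwa [h])
  · exact fun h => hRR (by rw [← h]; exact hB.apply_of_ne hNR)

theorem IsPlaneForest.relocate (hG : IsPlaneForest (insert R S) N Z G) (hR : R ∉ S)
    (hN : N ∉ S) (hZ : Z ∈ S) (hNR : N ≠ R) (hc : c.2 ≤ (children G.1 c.1).ncard)
    (hcR : Reaches G.1 c.1 R) :
    IsPlaneForest S N Z (relocate N R c G) ∧ Reaches (relocate N R c G).1 N R := by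
  obtain ⟨hfor, hpo, hNZ⟩ := hG
  obtain ⟨hfor', hNZ', hsel⟩ := hfor.relocate hN hR hZ hNR hNZ hcR
  have hN_R : ¬ Reaches G.1 N R := hfor.not_reaches_of_reaches hNZ (mem_insert_of_mem R hZ)
    (mem_insert R S) fun h => hR (h ▸ hZ)
  have hgN : G.1 N ≠ N := fun h => by simpa [hN, hNR] using (hfor.1 N).1 h
  refine ⟨⟨hfor', hpo.relocate hNR hgN ((hfor.1 R).2 (mem_insert R S)) ?_ ?_ ?_ hc, hNZ'⟩, hsel⟩
  · exact fun h => hN_R (by rw [← h]; exact reaches_apply _ _)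
  · exact fun h => hN_R (by rwa [h] at hcR)
  · exact fun h => hN_R (by rw [h] at hcR; exact hcR.of_apply)

theorem graft_cut (hF : IsPlaneForest S N Z F) (hR : R ∉ S) (hN : N ∉ S) (hZ : Z ∈ S)
    (hNR : N ≠ R) : graft R N (cut R N F).1 (cut R N F).2 = F := by
  have hpo := hF.2.1
  have hNN : F.1 N ≠ N := fun h => hN ((hF.1.1 N).1 h)
  have hRR : F.1 R ≠ R := fun h => hR ((hF.1.1 R).1 h)
  by_cases hB : Reaches F.1 N R
  · obtain ⟨-, hsel, -⟩ := hF.transplant hR hN hZ hNR hB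
    simp only [cut, graft, hB, hsel, slot_fst, if_true]
    have hpo₁ := hpo.detach hNN
    have hR₁ : (detach N F).1 R ≠ R := by simpa [Ne.symm hNR] using hRR
    have hN₂ : (detach R (detach N F)).1 N = N := by simp [hNR]
    rw [relocate, transplant, slot_attach, detach_attach hN₂
      (by rw [detach_snd_of_fixed (by simp) hNR, detach_snd_self]),
      attach_slot_detach hR₁ (hpo₁.bijOn _).injOn, attach_slot_detach hNN (hpo.bijOn _).injOn]
  · obtain ⟨-, hsel⟩ := hF.detach hR hB
    simp only [cut, graft, hB, hsel, slot_fst, if_false]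
    exact attach_slot_detach hRR (hpo.bijOn _).injOn

theorem cut_graft (hG : IsPlaneForest (insert R S) N Z G) (hR : R ∉ S) (hN : N ∉ S)
    (hZ : Z ∈ S) (hNR : N ≠ R) (hc : c.2 ≤ (children G.1 c.1).ncard) :
    cut R N (graft R N G c) = (G, c) := by
  have hpo := hG.2.1
  have hgR : G.1 R = R := (hG.1.1 R).2 (mem_insert R S)
  by_cases hB : Reaches G.1 c.1 R
  · obtain ⟨-, hsel⟩ := hG.relocate hR hN hZ hNR hc hB
    simp only [cut, graft, hB, hsel, if_true]
    have hgN : G.1 N ≠ N := fun h => by simpa [hN, hNR] using (hG.1.1 N).1 h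
    have hN₁ : (detach N G).1 N = N := by simp
    have hR₁ : (detach N G).1 R = R := by simp [Ne.symm hNR, hgR]
    have hN₂ : (attach R (slot G N) (detach N G)).1 N = N := by simp [hNR]
    rw [relocate, slot_attach, transplant, detach_attach hN₂
      (by rw [attach_snd_of_fixed hN₁ hNR, detach_snd_self]), slot_attach, detach_attach hR₁
      (by rw [detach_snd_of_fixed hgR (Ne.symm hNR), hpo.2 R hgR]),
      attach_slot_detach hgN (hpo.bijOn _).injOn]
  · obtain ⟨-, hsel⟩ := hG.attach hR hZ hc hB
    simp only [cut, graft, hB, hsel, if_false]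
    rw [detach_attach hgR (hpo.2 R hgR), slot_attach]

theorem IsPlaneForest.cut (hF : IsPlaneForest S N Z F) (hR : R ∉ S) (hN : N ∉ S) (hZ : Z ∈ S)
    (hNR : N ≠ R) :
    IsPlaneForest (insert R S) N Z (cut R N F).1 ∧
      (cut R N F).2.2 ≤ (children (cut R N F).1.1 (cut R N F).2.1).ncard := by
  by_cases hB : Reaches F.1 N R
  · simp only [_root_.cut, hB, if_true, slot_fst, slot_snd]
    exact (hF.transplant hR hN hZ hNR hB).imp_right And.right
  · simp only [_root_.cut, hB, if_false, slot_fst, slot_snd]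
    exact ⟨(hF.detach hR hB).1, hF.2.1.le_ncard_children_detach fun h => hR ((hF.1.1 R).1 h)⟩

theorem IsPlaneForest.graft (hG : IsPlaneForest (insert R S) N Z G) (hR : R ∉ S) (hN : N ∉ S)
    (hZ : Z ∈ S) (hNR : N ≠ R) (hc : c.2 ≤ (children G.1 c.1).ncard) :
    IsPlaneForest S N Z (graft R N G c) := by
  by_cases hB : Reaches G.1 c.1 R
  · simpa only [_root_.graft, hB, if_true] using (hG.relocate hR hN hZ hNR hc hB).1
  · simpa only [_root_.graft, hB, if_false] using (hG.attach hR hZ hc hB).1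

noncomputable def cutEquiv (hR : R ∉ S) (hN : N ∉ S) (hZ : Z ∈ S) (hNR : N ≠ R) :
    {F // IsPlaneForest S N Z F} ≃
      Σ G : {G // IsPlaneForest (insert R S) N Z G}, Corner G.1.1 where
  toFun F := ⟨⟨_, (F.2.cut hR hN hZ hNR).1⟩, ⟨_, (F.2.cut hR hN hZ hNR).2⟩⟩
  invFun X := ⟨_, X.1.2.graft hR hN hZ hNR X.2.2⟩
  left_inv F := Subtype.ext (graft_cut F.2 hR hN hZ hNR)
  right_inv X := Sigma.subtype_ext
    (Subtype.ext (congrArg Prod.fst (cut_graft X.1.2 hR hN hZ hNR X.2.2)))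
    (congrArg Prod.snd (cut_graft X.1.2 hR hN hZ hNR X.2.2))

theorem card_planeForest (hR : R ∉ S) (hN : N ∉ S) (hZ : Z ∈ S) (hNR : N ≠ R) :
    Nat.card {F // IsPlaneForest S N Z F} =
      Nat.card {G // IsPlaneForest (insert R S) N Z G} * (n + (insert R S)ᶜ.ncard) := by
  rw [Nat.card_congr (cutEquiv hR hN hZ hNR)]
  refine card_sigma_of_forall_card_eq fun G => ?_
  rw [card_corner, Fintype.card_fin, G.2.1.setOf_ne_eq_compl]

end Bijection

theorem ncard_compl_setOf_val_lt (n m : ℕ) : {v : Fin n | v.val < m}ᶜ.ncard = n - m := by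
  rw [ncard_compl, ncard_eq_toFinset_card', toFinset_ofPred, Fin.card_filter_val_lt,
    Nat.card_fin]
  omega

theorem plane_forest_recursion (n k : ℕ) (hk : 2 ≤ k) (hk' : k ≤ n - 1) :
    Nat.card {pr : (Fin n → Fin n) × (Fin n → ℕ) //
        IsRootedForest n (k - 1) pr.1 ∧ IsPlaneOrder n pr.1 pr.2 ∧
        ∃ m, pr.1^[m] ⟨n - 1, by omega⟩ = ⟨0, by omega⟩} =
    (2 * n - k) * Nat.card {pr : (Fin n → Fin n) × (Fin n → ℕ) //
        IsRootedForest n k pr.1 ∧ IsPlaneOrder n pr.1 pr.2 ∧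
        ∃ m, pr.1^[m] ⟨n - 1, by omega⟩ = ⟨0, by omega⟩} := by
  obtain ⟨K, rfl⟩ : ∃ K, k = K + 1 := ⟨k - 1, by omega⟩
  have hroots : insert (⟨K, by omega⟩ : Fin n) {v | v.val < K} = {v | v.val < K + 1} := by
    ext v
    simp only [mem_insert_iff, Fin.ext_iff, mem_ofPred_eq]
    omega
  have h := card_planeForest (S := {v : Fin n | v.val < K}) (R := ⟨K, by omega⟩)
    (N := ⟨n - 1, by omega⟩) (Z := ⟨0, by omega⟩) (show ¬ K < K by omega)
    (show ¬ n - 1 < K by omega) (show 0 < K by omega) (Fin.ne_of_val_ne (show n - 1 ≠ K by omega))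
  rw [hroots, ncard_compl_setOf_val_lt, show n + (n - (K + 1)) = 2 * n - (K + 1) by omega,
    mul_comm] at h
  simp only [Nat.add_sub_cancel]
  exact h -- `IsPlaneForest {v | v.val < K} N Z` unfolds to the predicate of the statement
end

section
/- For 1 ≤ r ≤ n, the number of forests of r non-leaf-vertex-labeled k-ary plane trees on kn+r vertices total, with roots labeled 1,…,r, equals (r/n)·C(kn, n−r)·(n−r)!. -/
/-- A forest of `r` non-leaf-vertex-labeled `k`-ary plane trees whose `n` internal
(non-leaf) vertices carry the labels `1, …, n` and whose roots carry the labels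
`1, …, r`.  Such a forest is encoded by the data of the parent `p v` of each internal
vertex `v` (internal vertices `0, …, r-1`, i.e. labels `1, …, r`, are the roots and
are fixed points of `p`, and every internal vertex eventually reaches a root) together
with, for each non-root internal vertex, the slot `slot v ∈ {0, …, k-1}` it occupies
among the `k` (linearly ordered) children of its parent; distinct internal children of
a common parent occupy distinct slots, and the remaining slots of each internal vertex
are occupied by unlabeled leaves.  A tree of such a forest with root `v` has `k`
children slots at each of its internal vertices, so the forest has `k*n` non-root
vertices plus `r` roots, i.e. `k*n + r` vertices in all. -/
def IsKAryPlaneForest (n k r : ℕ) (p : Fin n → Fin n) (slot : Fin n → Fin k) : Prop :=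
  (∀ v, p v = v ↔ v.val < r) ∧
  (∀ v, ∃ m, ((p^[m]) v).val < r) ∧
  (∀ v w, v ≠ w → p v ≠ v → p w ≠ w → p v = p w → slot v ≠ slot w) ∧
  (∀ v, p v = v → (slot v).val = 0)

namespace KAryAux

open Function Finset

variable {n k r : ℕ}

lemma iterate_fixed {α : Type*} {p : α → α} {x : α} (h : p x = x) (m : ℕ) : p^[m] x = x := by
  induction m with
  | zero => rfl
  | succ m ih => rw [Function.iterate_succ_apply', ih, h]

lemma fixed_after {p : Fin n → Fin n} (h1 : ∀ v, p v = v ↔ v.val < r) {x : Fin n} {a b : ℕ}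
    (ha : (p^[a] x).val < r) (hab : a ≤ b) : p^[b] x = p^[a] x := by
  obtain ⟨c, rfl⟩ := Nat.exists_eq_add_of_le hab
  rw [Nat.add_comm, Function.iterate_add_apply]
  exact iterate_fixed ((h1 _).2 ha) c

lemma root_unique {p : Fin n → Fin n} (h1 : ∀ v, p v = v ↔ v.val < r) {x : Fin n} {a b : ℕ}
    (ha : (p^[a] x).val < r) (hb : (p^[b] x).val < r) : p^[a] x = p^[b] x := by
  rcases le_total a b with h | h
  · rw [fixed_after h1 ha h]
  · rw [fixed_after h1 hb h]

lemma no_cycle {p : Fin n → Fin n} (h1 : ∀ v, p v = v ↔ v.val < r)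
    (h2 : ∀ v, ∃ m, ((p^[m]) v).val < r) {x : Fin n} (hx : r ≤ x.val) {c : ℕ}
    (hc : 0 < c) (hcyc : p^[c] x = x) : False := by
  obtain ⟨a, ha⟩ := h2 x
  have hiter : ∀ j : ℕ, p^[j * c] x = x := by
    intro j
    induction j with
    | zero => simp
    | succ j ih => rw [Nat.succ_mul, Function.iterate_add_apply, hcyc, ih]
  have hle : a ≤ a * c := Nat.le_mul_of_pos_right a hc
  have := fixed_after h1 ha hle
  rw [hiter a] at this
  rw [← this] at ha
  omega

lemma update_iterate_eq {p : Fin n → Fin n} {c ρ : Fin n} {m : ℕ} {x : Fin n}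
    (h : ∀ i < m, p^[i] x ≠ ρ) : (Function.update p ρ c)^[m] x = p^[m] x := by
  induction m with
  | zero => rfl
  | succ m ih =>
    rw [Function.iterate_succ_apply', Function.iterate_succ_apply',
      ih (fun i hi => h i (by omega)), Function.update_of_ne (h m (by omega))]

lemma update_iterate_eq' {p : Fin n → Fin n} {c ρ : Fin n} {m : ℕ} {x : Fin n}
    (h : ∀ i < m, (Function.update p ρ c)^[i] x ≠ ρ) :
    (Function.update p ρ c)^[m] x = p^[m] x := by
  induction m with
  | zero => rfl
  | succ m ih =>
    rw [Function.iterate_succ_apply', Function.iterate_succ_apply',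
      ih (fun i hi => h i (by omega))]
    have hm : p^[m] x ≠ ρ := by
      rw [← ih (fun i hi => h i (by omega))]; exact h m (by omega)
    exact Function.update_of_ne hm _ _

/-! ### the root function -/

noncomputable def rootFn (p : Fin n → Fin n) (h2 : ∀ v, ∃ m, ((p^[m]) v).val < r)
    (x : Fin n) : Fin n :=
  p^[Nat.find (h2 x)] x

lemma rootFn_lt {p : Fin n → Fin n} (h2 : ∀ v, ∃ m, ((p^[m]) v).val < r) (x : Fin n) :
    (rootFn p h2 x).val < r :=
  Nat.find_spec (h2 x)

lemma rootFn_eq_iter {p : Fin n → Fin n} (h1 : ∀ v, p v = v ↔ v.val < r)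
    (h2 : ∀ v, ∃ m, ((p^[m]) v).val < r) {x : Fin n} {a : ℕ} (ha : (p^[a] x).val < r) :
    rootFn p h2 x = p^[a] x :=
  root_unique h1 (Nat.find_spec (h2 x)) ha

lemma rootFn_eq_of_reach {p : Fin n → Fin n} (h1 : ∀ v, p v = v ↔ v.val < r)
    (h2 : ∀ v, ∃ m, ((p^[m]) v).val < r) {x y : Fin n} {a : ℕ} (ha : p^[a] x = y)
    (hy : y.val < r) : rootFn p h2 x = y := by
  rw [rootFn_eq_iter h1 h2 (ha ▸ hy), ha]

lemma reach_rootFn {p : Fin n → Fin n} (h2 : ∀ v, ∃ m, ((p^[m]) v).val < r) (x : Fin n) :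
    ∃ m, p^[m] x = rootFn p h2 x :=
  ⟨Nat.find (h2 x), rfl⟩

lemma reach_iff_rootFn {p : Fin n → Fin n} (h1 : ∀ v, p v = v ↔ v.val < r)
    (h2 : ∀ v, ∃ m, ((p^[m]) v).val < r) {x y : Fin n} (hy : y.val < r) :
    (∃ m, p^[m] x = y) ↔ rootFn p h2 x = y := by
  constructor
  · rintro ⟨m, hm⟩; exact rootFn_eq_of_reach h1 h2 hm hy
  · rintro rfl; exact reach_rootFn h2 x

lemma rootFn_apply {p : Fin n → Fin n} (h1 : ∀ v, p v = v ↔ v.val < r)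
    (h2 : ∀ v, ∃ m, ((p^[m]) v).val < r) (x : Fin n) :
    rootFn p h2 (p x) = rootFn p h2 x := by
  obtain ⟨m, hm⟩ := reach_rootFn h2 (p x)
  refine (rootFn_eq_of_reach h1 h2 (a := m + 1) ?_ (rootFn_lt h2 (p x))).symm
  rw [Function.iterate_succ_apply]; exact hm


/-! ### forests, detach and attach -/

abbrev Forest (n k r : ℕ) :=
  {ps : (Fin n → Fin n) × (Fin n → Fin k) // IsKAryPlaneForest n k r ps.1 ps.2}

noncomputable instance instFintypeForest (n k r : ℕ) : Fintype (Forest n k r) :=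
  Fintype.ofFinite _

def ValidPair (r : ℕ) (hr : r < n) (q : Fin n → Fin n) (t : Fin n → Fin k)
    (vs : Fin n × Fin k) : Prop :=
  (¬ ∃ m, q^[m] vs.1 = (⟨r, hr⟩ : Fin n)) ∧
  ∀ w, q w = vs.1 → q w ≠ w → t w ≠ vs.2

section Detach

variable (hk : 1 ≤ k) (hr : r < n)

lemma detach_forest {p : Fin n → Fin n} {slot : Fin n → Fin k}
    (F : IsKAryPlaneForest n k r p slot) :
    IsKAryPlaneForest n k (r + 1)
      (Function.update p ⟨r, hr⟩ ⟨r, hr⟩) (Function.update slot ⟨r, hr⟩ ⟨0, hk⟩) := by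
  obtain ⟨h1, h2, h3, h4⟩ := F
  set ρ : Fin n := ⟨r, hr⟩ with hρ
  refine ⟨?_, ?_, ?_, ?_⟩
  · intro v
    by_cases hv : v = ρ
    · subst hv; simp [ρ]
    · rw [Function.update_of_ne hv]
      have hvr : v.val ≠ r := fun h => hv (Fin.ext h)
      rw [h1 v]; omega
  · intro v
    obtain ⟨a, ha⟩ := h2 v
    clear h3 h4
    induction a generalizing v with
    | zero =>
      simp only [Function.iterate_zero, id_eq] at ha
      exact ⟨0, by simp only [Function.iterate_zero, id_eq]; omega⟩
    | succ a ih =>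
      by_cases hv : v = ρ
      · subst hv
        refine ⟨0, ?_⟩
        simp only [Function.iterate_zero, id_eq, ρ]
        omega
      · by_cases hvr : v.val < r
        · exact ⟨0, by simp only [Function.iterate_zero, id_eq]; omega⟩
        · rw [Function.iterate_succ_apply] at ha
          obtain ⟨m, hm⟩ := ih (p v) ha
          refine ⟨m + 1, ?_⟩
          rw [Function.iterate_succ_apply, Function.update_of_ne hv]
          exact hm
  · intro v w hvw hv hw hpq
    have hvρ : v ≠ ρ := fun h => hv (by rw [h, Function.update_self])
    have hwρ : w ≠ ρ := fun h => hw (by rw [h, Function.update_self])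
    rw [Function.update_of_ne hvρ] at hv hpq
    rw [Function.update_of_ne hwρ] at hw hpq
    rw [Function.update_of_ne hvρ, Function.update_of_ne hwρ]
    exact h3 v w hvw hv hw hpq
  · intro v hv
    by_cases hvρ : v = ρ
    · subst hvρ; rw [Function.update_self]
    · rw [Function.update_of_ne hvρ] at hv ⊢
      exact h4 v hv

lemma detach_valid {p : Fin n → Fin n} {slot : Fin n → Fin k}
    (F : IsKAryPlaneForest n k r p slot) :
    ValidPair r hr (Function.update p ⟨r, hr⟩ ⟨r, hr⟩)
      (Function.update slot ⟨r, hr⟩ ⟨0, hk⟩) (p ⟨r, hr⟩, slot ⟨r, hr⟩) := by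
  classical
  obtain ⟨h1, h2, h3, h4⟩ := F
  set ρ : Fin n := ⟨r, hr⟩ with hρ
  constructor
  · rintro hex
    have m := Nat.find hex
    have hm : (Function.update p ρ ρ)^[Nat.find hex] (p ρ) = ρ := Nat.find_spec hex
    have hmin : ∀ i < Nat.find hex, (Function.update p ρ ρ)^[i] (p ρ) ≠ ρ :=
      fun i hi => Nat.find_min hex hi
    rw [update_iterate_eq' hmin] at hm
    have hcyc : p^[Nat.find hex + 1] ρ = ρ := by
      rw [Function.iterate_succ_apply]; exact hm
    exact no_cycle h1 h2 (x := ρ) (le_refl r) (Nat.succ_pos _) hcyc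
  · intro w hw hwne
    have hwρ : w ≠ ρ := fun h => hwne (by rw [h, Function.update_self])
    rw [Function.update_of_ne hwρ] at hw hwne
    rw [Function.update_of_ne hwρ]
    have hρfix : p ρ ≠ ρ := by
      intro h; have := (h1 ρ).1 h; simp [ρ] at this
    exact h3 w ρ hwρ hwne hρfix hw

lemma attach_forest {q : Fin n → Fin n} {t : Fin n → Fin k} {vs : Fin n × Fin k}
    (F : IsKAryPlaneForest n k (r + 1) q t) (hvs : ValidPair r hr q t vs) :
    IsKAryPlaneForest n k r (Function.update q ⟨r, hr⟩ vs.1) (Function.update t ⟨r, hr⟩ vs.2) := by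
  obtain ⟨h1, h2, h3, h4⟩ := F
  set ρ : Fin n := ⟨r, hr⟩ with hρ
  obtain ⟨hreach, hslot⟩ := hvs
  set v : Fin n := vs.1
  have hvρ : v ≠ ρ := fun h => hreach ⟨0, h⟩
  have havoid : ∀ i, q^[i] v ≠ ρ := fun i hi => hreach ⟨i, hi⟩
  -- the attach point eventually reaches an old root (< r)
  have Hroot : ∃ b, ((Function.update q ρ v)^[b] v).val < r := by
    obtain ⟨b, hb⟩ := h2 v
    have hne : (q^[b] v).val ≠ r := fun h => havoid b (Fin.ext h)
    refine ⟨b, ?_⟩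
    rw [update_iterate_eq (fun i _ => havoid i)]
    omega
  have hbase : ∀ x : Fin n, x.val < r + 1 → ∃ m, ((Function.update q ρ v)^[m] x).val < r := by
    intro x hx
    by_cases hxr : x.val < r
    · exact ⟨0, by simp only [Function.iterate_zero, id_eq]; omega⟩
    · have hxρ : x = ρ := by
        apply Fin.ext
        simp only [ρ]
        omega
      subst hxρ
      obtain ⟨b, hb⟩ := Hroot
      refine ⟨b + 1, ?_⟩
      rw [Function.iterate_succ_apply, Function.update_self]
      exact hb
  refine ⟨?_, ?_, ?_, ?_⟩
  · intro x
    by_cases hx : x = ρ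
    · subst hx
      rw [Function.update_self]
      simp only [ρ]
      constructor
      · intro h; exact absurd h hvρ
      · intro h; omega
    · rw [Function.update_of_ne hx, h1 x]
      have : x.val ≠ r := fun h => hx (Fin.ext h)
      omega
  · intro x
    obtain ⟨a, ha⟩ := h2 x
    clear h3 h4 hslot
    induction a generalizing x with
    | zero =>
      simp only [Function.iterate_zero, id_eq] at ha
      exact hbase x ha
    | succ a ih =>
      by_cases hx : x.val < r + 1
      · exact hbase x hx
      · have hxρ : x ≠ ρ := fun h => by simp [h, ρ] at hx
        rw [Function.iterate_succ_apply] at ha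
        obtain ⟨m, hm⟩ := ih (q x) ha
        refine ⟨m + 1, ?_⟩
        rw [Function.iterate_succ_apply, Function.update_of_ne hxρ]
        exact hm
  · intro a b hab hpa hpb hpq
    by_cases haρ : a = ρ
    · subst haρ
      have hbρ : b ≠ ρ := fun h => hab h.symm
      rw [Function.update_self] at hpq
      rw [Function.update_of_ne hbρ] at hpq hpb
      rw [Function.update_self, Function.update_of_ne hbρ]
      exact (hslot b hpq.symm hpb).symm
    · by_cases hbρ : b = ρ
      · subst hbρ
        rw [Function.update_self] at hpq
        rw [Function.update_of_ne haρ] at hpq hpa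
        rw [Function.update_self, Function.update_of_ne haρ]
        exact hslot a hpq hpa
      · rw [Function.update_of_ne haρ] at hpa hpq
        rw [Function.update_of_ne hbρ] at hpb hpq
        rw [Function.update_of_ne haρ, Function.update_of_ne hbρ]
        exact h3 a b hab hpa hpb hpq
  · intro x hx
    have hxρ : x ≠ ρ := by
      intro h; subst h
      rw [Function.update_self] at hx
      exact hvρ hx
    rw [Function.update_of_ne hxρ] at hx ⊢
    exact h4 x hx

end Detach


section Fiber

variable (hk : 1 ≤ k) (hr : r < n)

noncomputable def detachF (F : Forest n k r) : Forest n k (r + 1) :=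
  ⟨(Function.update F.1.1 ⟨r, hr⟩ ⟨r, hr⟩, Function.update F.1.2 ⟨r, hr⟩ ⟨0, hk⟩),
    detach_forest hk hr F.2⟩

noncomputable def fiberEquiv (F' : Forest n k (r + 1)) :
    {F : Forest n k r // detachF hk hr F = F'} ≃
      {vs : Fin n × Fin k // ValidPair r hr F'.1.1 F'.1.2 vs} where
  toFun := fun ⟨F, hF⟩ =>
    ⟨(F.1.1 ⟨r, hr⟩, F.1.2 ⟨r, hr⟩), by rw [← hF]; exact detach_valid hk hr F.2⟩
  invFun := fun ⟨vs, hvs⟩ =>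
    ⟨⟨(Function.update F'.1.1 ⟨r, hr⟩ vs.1, Function.update F'.1.2 ⟨r, hr⟩ vs.2),
        attach_forest hr F'.2 hvs⟩, by
      apply Subtype.ext
      show (Function.update (Function.update F'.1.1 ⟨r, hr⟩ vs.1) ⟨r, hr⟩ ⟨r, hr⟩,
          Function.update (Function.update F'.1.2 ⟨r, hr⟩ vs.2) ⟨r, hr⟩ ⟨0, hk⟩) = F'.1
      have hfix : F'.1.1 ⟨r, hr⟩ = ⟨r, hr⟩ := (F'.2.1 _).2 (by simp)
      have hsl : F'.1.2 ⟨r, hr⟩ = ⟨0, hk⟩ := Fin.ext (F'.2.2.2.2 _ hfix)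
      rw [Function.update_idem, Function.update_idem]
      have e1 : Function.update F'.1.1 ⟨r, hr⟩ ⟨r, hr⟩ = F'.1.1 := by
        funext x
        by_cases hx : x = ⟨r, hr⟩
        · subst hx; rw [Function.update_self, hfix]
        · rw [Function.update_of_ne hx]
      have e2 : Function.update F'.1.2 ⟨r, hr⟩ ⟨0, hk⟩ = F'.1.2 := by
        funext x
        by_cases hx : x = ⟨r, hr⟩
        · subst hx; rw [Function.update_self, hsl]
        · rw [Function.update_of_ne hx]
      rw [e1, e2]⟩
  left_inv := by
    rintro ⟨F, hF⟩
    subst hF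
    apply Subtype.ext
    apply Subtype.ext
    show (Function.update (Function.update F.1.1 ⟨r, hr⟩ ⟨r, hr⟩) ⟨r, hr⟩ (F.1.1 ⟨r, hr⟩),
        Function.update (Function.update F.1.2 ⟨r, hr⟩ ⟨0, hk⟩) ⟨r, hr⟩ (F.1.2 ⟨r, hr⟩)) = F.1
    rw [Function.update_idem, Function.update_idem,
      Function.update_eq_self, Function.update_eq_self]
  right_inv := by
    rintro ⟨vs, hvs⟩
    apply Subtype.ext
    show (Function.update F'.1.1 ⟨r, hr⟩ vs.1 ⟨r, hr⟩,
        Function.update F'.1.2 ⟨r, hr⟩ vs.2 ⟨r, hr⟩) = vs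
    rw [Function.update_self, Function.update_self]

end Fiber

lemma card_forest_eq_sum (hk : 1 ≤ k) (hr : r < n) :
    Nat.card (Forest n k r) =
      ∑ F' : Forest n k (r + 1),
        Nat.card {vs : Fin n × Fin k // ValidPair r hr F'.1.1 F'.1.2 vs} := by
  classical
  haveI : ∀ F' : Forest n k (r + 1), Fintype {F : Forest n k r // detachF hk hr F = F'} :=
    fun F' => Fintype.ofFinite _
  calc Nat.card (Forest n k r)
      = Nat.card (Σ F' : Forest n k (r + 1), {F : Forest n k r // detachF hk hr F = F'}) :=
        (Nat.card_congr (Equiv.sigmaFiberEquiv (detachF hk hr))).symm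
    _ = ∑ F' : Forest n k (r + 1), Nat.card {F : Forest n k r // detachF hk hr F = F'} := by
        rw [Nat.card_eq_fintype_card, Fintype.card_sigma]
        simp [Nat.card_eq_fintype_card]
    _ = _ := Finset.sum_congr rfl fun F' _ => Nat.card_congr (fiberEquiv hk hr F')

lemma card_forest_self (hk : 1 ≤ k) (hn : 0 < n) : Nat.card (Forest n k n) = 1 := by
  haveI : Unique (Forest n k n) := by
    refine ⟨⟨⟨(id, fun _ => ⟨0, hk⟩), ?_, ?_, ?_, ?_⟩⟩, ?_⟩
    · intro v; simpa using v.isLt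
    · intro v; exact ⟨0, by simpa using v.isLt⟩
    · intro v w _ hv _ _; exact absurd rfl hv
    · intro v _; rfl
    · rintro ⟨⟨p, slot⟩, h1, h2, h3, h4⟩
      apply Subtype.ext
      show (p, slot) = (id, fun _ => ⟨0, hk⟩)
      have hp : p = id := funext fun v => (h1 v).2 v.isLt
      have hs : slot = fun _ => ⟨0, hk⟩ := funext fun v =>
        Fin.ext (h4 v ((h1 v).2 v.isLt))
      rw [hp, hs]
  exact Nat.card_unique


/-! ### counting valid pairs for a fixed forest -/

lemma nat_card_subtype {α : Type*} [Fintype α] (P : α → Prop) [DecidablePred P] :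
    Nat.card {x // P x} = (Finset.univ.filter P).card := by
  rw [Nat.card_eq_fintype_card, Fintype.card_subtype]

lemma card_val_lt (hr : r ≤ n) :
    ((Finset.univ : Finset (Fin n)).filter (fun w => w.val < r)).card = r := by
  classical
  have : (Finset.univ : Finset (Fin n)).filter (fun w => w.val < r) =
      Finset.map (Fin.castLEEmb hr) Finset.univ := by
    ext x
    simp only [Finset.mem_filter, Finset.mem_univ, true_and, Finset.mem_map,
      Fin.castLEEmb, Function.Embedding.coeFn_mk]
    constructor
    · intro hx; exact ⟨⟨x.val, hx⟩, Fin.ext rfl⟩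
    · rintro ⟨y, rfl⟩; simpa using y.isLt
  rw [this, Finset.card_map, Finset.card_univ, Fintype.card_fin]

section Counting

variable {q : Fin n → Fin n} {t : Fin n → Fin k}

lemma count_valid (hF : IsKAryPlaneForest n k (r + 1) q t) (hr : r < n) :
    Nat.card {vs : Fin n × Fin k // ValidPair r hr q t vs}
      + k * Nat.card {x : Fin n // rootFn q hF.2.1 x = ⟨r, hr⟩}
      + Nat.card {w : Fin n // q w ≠ w ∧ rootFn q hF.2.1 w ≠ ⟨r, hr⟩} = k * n := by
  classical
  obtain ⟨h1, h2, h3, h4⟩ := hF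
  set ρ : Fin n := ⟨r, hr⟩ with hρdef
  have hρlt : ρ.val < r + 1 := by simp [hρdef]
  set rt : Fin n → Fin n := rootFn q (And.intro h1 (And.intro h2 (And.intro h3 h4))).2.1 with hrt
  have hrt2 : rt = rootFn q h2 := rfl
  set Occ : Fin n × Fin k → Prop := fun vs => ∃ w, q w ≠ w ∧ q w = vs.1 ∧ t w = vs.2 with hOcc
  -- characterize validity
  have hval : ∀ vs : Fin n × Fin k, ValidPair r hr q t vs ↔ (rt vs.1 ≠ ρ ∧ ¬ Occ vs) := by
    intro vs
    unfold ValidPair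
    constructor
    · rintro ⟨hv1, hv2⟩
      refine ⟨?_, ?_⟩
      · intro hroot
        exact hv1 ((reach_iff_rootFn h1 h2 hρlt).2 hroot)
      · rintro ⟨w, hw1, hw2, hw3⟩
        exact hv2 w hw2 hw1 hw3
    · rintro ⟨hv1, hv2⟩
      refine ⟨?_, ?_⟩
      · intro hreach
        exact hv1 ((reach_iff_rootFn h1 h2 hρlt).1 hreach)
      · intro w hw2 hw1 hw3
        exact hv2 ⟨w, hw1, hw2, hw3⟩
  -- the three finsets
  set A := (Finset.univ : Finset (Fin n × Fin k)).filter (fun vs => rt vs.1 = ρ) with hA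
  set B := (Finset.univ : Finset (Fin n × Fin k)).filter
      (fun vs => ¬ (rt vs.1 = ρ) ∧ Occ vs) with hB
  set V := (Finset.univ : Finset (Fin n × Fin k)).filter
      (fun vs => ¬ (rt vs.1 = ρ) ∧ ¬ Occ vs) with hV
  have hsplit : A.card + (B.card + V.card) = k * n := by
    have e1 : A.card + ((Finset.univ : Finset (Fin n × Fin k)).filter
        (fun vs => ¬ (rt vs.1 = ρ))).card = (Finset.univ : Finset (Fin n × Fin k)).card := by
      rw [hA]; exact Finset.card_filter_add_card_filter_not _
    have e2 : B.card + V.card = ((Finset.univ : Finset (Fin n × Fin k)).filter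
        (fun vs => ¬ (rt vs.1 = ρ))).card := by
      rw [hB, hV, ← Finset.filter_filter, ← Finset.filter_filter]
      exact Finset.card_filter_add_card_filter_not _
    rw [e2, e1]
    simp [mul_comm]
  -- A
  have hAcard : A.card =
      ((Finset.univ : Finset (Fin n)).filter (fun x => rt x = ρ)).card * k := by
    have : A = ((Finset.univ : Finset (Fin n)).filter (fun x => rt x = ρ)) ×ˢ
        (Finset.univ : Finset (Fin k)) := by
      ext vs
      simp [hA, Finset.mem_product]
    rw [this, Finset.card_product, Finset.card_univ, Fintype.card_fin]
  -- B
  set W := (Finset.univ : Finset (Fin n)).filter (fun w => q w ≠ w ∧ rt w ≠ ρ) with hW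
  have hBcard : B.card = W.card := by
    have himg : B = W.image (fun w => (q w, t w)) := by
      ext vs
      simp only [hB, hW, Finset.mem_filter, Finset.mem_univ, true_and, Finset.mem_image]
      constructor
      · rintro ⟨hv1, w, hw1, hw2, hw3⟩
        refine ⟨w, ⟨hw1, ?_⟩, by rw [hw2, hw3]⟩
        rw [← hw2] at hv1
        rwa [hrt2, rootFn_apply h1 h2 w] at hv1
      · rintro ⟨w, ⟨hw1, hw2⟩, rfl⟩
        refine ⟨?_, w, hw1, rfl, rfl⟩
        rwa [hrt2, rootFn_apply h1 h2 w]
    rw [himg]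
    apply Finset.card_image_of_injOn
    intro w1 hw1 w2 hw2 heq
    by_contra hne
    simp only [hW, Finset.coe_filter, Set.mem_setOf_eq, Finset.mem_univ, true_and] at hw1 hw2
    exact h3 w1 w2 hne hw1.1 hw2.1 (congrArg Prod.fst heq) (congrArg Prod.snd heq)
  -- put together
  rw [nat_card_subtype, nat_card_subtype, nat_card_subtype]
  have hVeq : (Finset.univ.filter (fun vs => ValidPair r hr q t vs)) = V := by
    rw [hV]; apply Finset.filter_congr; intro vs _; exact hval vs
  rw [hVeq]
  calc V.card + k * (Finset.univ.filter (fun x => rt x = ρ)).card + W.card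
      = A.card + (B.card + V.card) := by rw [hAcard, hBcard]; ring
    _ = k * n := hsplit

lemma count_split (hF : IsKAryPlaneForest n k (r + 1) q t) (hr : r < n) :
    Nat.card {x : Fin n // rootFn q hF.2.1 x = ⟨r, hr⟩}
      + Nat.card {w : Fin n // q w ≠ w ∧ rootFn q hF.2.1 w ≠ ⟨r, hr⟩} + r = n := by
  classical
  obtain ⟨h1, h2, h3, h4⟩ := hF
  set ρ : Fin n := ⟨r, hr⟩ with hρdef
  set rt : Fin n → Fin n := rootFn q (And.intro h1 (And.intro h2 (And.intro h3 h4))).2.1 with hrt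
  have hrt2 : rt = rootFn q h2 := rfl
  -- fixed points have themselves as root
  have hfixroot : ∀ w : Fin n, q w = w → rt w = w := by
    intro w hw
    rw [hrt2]
    exact rootFn_eq_of_reach h1 h2 (a := 0) rfl ((h1 w).1 hw)
  have e1 : ((Finset.univ : Finset (Fin n)).filter (fun x => rt x = ρ)).card
      + ((Finset.univ : Finset (Fin n)).filter (fun x => ¬ (rt x = ρ))).card = n := by
    rw [Finset.card_filter_add_card_filter_not]
    simp
  have e2 : ((Finset.univ : Finset (Fin n)).filter (fun w => q w ≠ w ∧ rt w ≠ ρ)).card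
      + ((Finset.univ : Finset (Fin n)).filter (fun w => ¬ (q w ≠ w) ∧ rt w ≠ ρ)).card
      = ((Finset.univ : Finset (Fin n)).filter (fun x => ¬ (rt x = ρ))).card := by
    have t1 : ((Finset.univ : Finset (Fin n)).filter (fun w => q w ≠ w ∧ rt w ≠ ρ)) =
        ((Finset.univ : Finset (Fin n)).filter (fun x => ¬ (rt x = ρ))).filter
          (fun w => q w ≠ w) := by
      rw [Finset.filter_filter]; apply Finset.filter_congr; intro x _
      constructor
      · intro h; exact ⟨h.2, h.1⟩
      · intro h; exact ⟨h.2, h.1⟩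
    have t2 : ((Finset.univ : Finset (Fin n)).filter (fun w => ¬ (q w ≠ w) ∧ rt w ≠ ρ)) =
        ((Finset.univ : Finset (Fin n)).filter (fun x => ¬ (rt x = ρ))).filter
          (fun w => ¬ (q w ≠ w)) := by
      rw [Finset.filter_filter]; apply Finset.filter_congr; intro x _
      constructor
      · intro h; exact ⟨h.2, h.1⟩
      · intro h; exact ⟨h.2, h.1⟩
    rw [t1, t2]
    exact Finset.card_filter_add_card_filter_not _
  have e3 : ((Finset.univ : Finset (Fin n)).filter (fun w => ¬ (q w ≠ w) ∧ rt w ≠ ρ))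
      = (Finset.univ : Finset (Fin n)).filter (fun w => w.val < r) := by
    apply Finset.filter_congr
    intro w _
    simp only [not_not]
    constructor
    · rintro ⟨hw, hroot⟩
      have hlt : w.val < r + 1 := (h1 w).1 hw
      have : w ≠ ρ := fun h => hroot (by rw [h] at hw ⊢; exact hfixroot ρ hw)
      have : w.val ≠ r := fun h => this (Fin.ext h)
      omega
    · intro hwr
      have hfix : q w = w := (h1 w).2 (by omega)
      refine ⟨hfix, ?_⟩
      rw [hfixroot w hfix]
      intro h
      rw [hρdef] at h
      have := congrArg Fin.val h
      simp at this
      omega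
  rw [nat_card_subtype, nat_card_subtype]
  rw [e3, card_val_lt (le_of_lt hr)] at e2
  omega

end Counting


/-! ### swapping two roots -/

lemma conj_iterate {α : Type*} (π : α → α) (hπ : ∀ x, π (π x) = x) (q : α → α) (m : ℕ)
    (x : α) : (fun y => π (q (π y)))^[m] x = π (q^[m] (π x)) := by
  induction m generalizing x with
  | zero => simp [hπ]
  | succ m ih =>
    rw [Function.iterate_succ_apply', Function.iterate_succ_apply', ih]
    simp [hπ]

section Swap

variable (hr : r < n)

lemma conj_forest {q : Fin n → Fin n} {t : Fin n → Fin k}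
    (hF : IsKAryPlaneForest n k (r + 1) q t) (j : Fin n) (hj : j.val < r + 1) :
    IsKAryPlaneForest n k (r + 1)
      (fun x => Equiv.swap j ⟨r, hr⟩ (q (Equiv.swap j ⟨r, hr⟩ x)))
      (fun x => t (Equiv.swap j ⟨r, hr⟩ x)) := by
  obtain ⟨h1, h2, h3, h4⟩ := hF
  set ρ : Fin n := ⟨r, hr⟩ with hρdef
  set π : Equiv.Perm (Fin n) := Equiv.swap j ρ with hπdef
  have hπinv : ∀ x, π (π x) = x := fun x => Equiv.swap_apply_self _ _ x
  have hπlt : ∀ x : Fin n, (π x).val < r + 1 ↔ x.val < r + 1 := by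
    intro x
    by_cases hxj : x = j
    · subst hxj; rw [Equiv.swap_apply_left]; simp [hρdef]; omega
    · by_cases hxρ : x = ρ
      · subst hxρ; rw [Equiv.swap_apply_right]; simp [hρdef]; omega
      · rw [Equiv.swap_apply_of_ne_of_ne hxj hxρ]
  have hπinj : Function.Injective π := π.injective
  refine ⟨?_, ?_, ?_, ?_⟩
  · intro v
    show π (q (π v)) = v ↔ v.val < r + 1
    constructor
    · intro h
      have hfix : q (π v) = π v := by
        have := congrArg π h
        rwa [hπinv] at this
      have := (h1 (π v)).1 hfix
      rwa [hπlt] at this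
    · intro h
      have : q (π v) = π v := (h1 (π v)).2 ((hπlt v).2 h)
      show π (q (π v)) = v
      rw [this, hπinv]
  · intro v
    obtain ⟨m, hm⟩ := h2 (π v)
    refine ⟨m, ?_⟩
    rw [conj_iterate π hπinv q m v]
    rw [hπlt]
    exact hm
  · intro v w hvw hv hw hpq
    have hv' : q (π v) ≠ π v := by
      intro h; apply hv; show π (q (π v)) = v; rw [h, hπinv]
    have hw' : q (π w) ≠ π w := by
      intro h; apply hw; show π (q (π w)) = w; rw [h, hπinv]
    exact h3 (π v) (π w) (fun h => hvw (hπinj h)) hv' hw' (hπinj hpq)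
  · intro v hv
    show (t (π v)).val = 0
    apply h4
    have := congrArg π hv
    rwa [hπinv] at this

noncomputable def swapF (j : Fin n) (hj : j.val < r + 1) :
    Forest n k (r + 1) ≃ Forest n k (r + 1) where
  toFun F := ⟨(fun x => Equiv.swap j ⟨r, hr⟩ (F.1.1 (Equiv.swap j ⟨r, hr⟩ x)),
      fun x => F.1.2 (Equiv.swap j ⟨r, hr⟩ x)), conj_forest hr F.2 j hj⟩
  invFun F := ⟨(fun x => Equiv.swap j ⟨r, hr⟩ (F.1.1 (Equiv.swap j ⟨r, hr⟩ x)),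
      fun x => F.1.2 (Equiv.swap j ⟨r, hr⟩ x)), conj_forest hr F.2 j hj⟩
  left_inv := by
    rintro ⟨⟨q, t⟩, hF⟩
    apply Subtype.ext
    show (_, _) = (q, t)
    refine Prod.ext ?_ ?_ <;> funext x <;> simp [Equiv.swap_apply_self]
  right_inv := by
    rintro ⟨⟨q, t⟩, hF⟩
    apply Subtype.ext
    show (_, _) = (q, t)
    refine Prod.ext ?_ ?_ <;> funext x <;> simp [Equiv.swap_apply_self]

lemma swap_tree_card (j : Fin n) (hj : j.val < r + 1) (F : Forest n k (r + 1)) :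
    Nat.card {x : Fin n //
        rootFn (swapF hr j hj F).1.1 (swapF hr j hj F).2.2.1 x = ⟨r, hr⟩} =
      Nat.card {x : Fin n // rootFn F.1.1 F.2.2.1 x = j} := by
  obtain ⟨⟨q, t⟩, hF⟩ := F
  set ρ : Fin n := ⟨r, hr⟩ with hρdef
  set π : Equiv.Perm (Fin n) := Equiv.swap j ρ with hπdef
  have hπinv : ∀ x, π (π x) = x := fun x => Equiv.swap_apply_self _ _ x
  have hπlt : ∀ x : Fin n, (π x).val < r + 1 ↔ x.val < r + 1 := by
    intro x
    by_cases hxj : x = j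
    · subst hxj; rw [Equiv.swap_apply_left]; simp [hρdef]; omega
    · by_cases hxρ : x = ρ
      · subst hxρ; rw [Equiv.swap_apply_right]; simp [hρdef]; omega
      · rw [Equiv.swap_apply_of_ne_of_ne hxj hxρ]
  have h1 := hF.1
  have h2 := hF.2.1
  have hF'' := (swapF hr j hj ⟨(q, t), hF⟩).2
  have hconjroot : ∀ x : Fin n,
      rootFn (swapF hr j hj ⟨(q, t), hF⟩).1.1 (swapF hr j hj ⟨(q, t), hF⟩).2.2.1 x
        = π (rootFn q h2 (π x)) := by
    intro x
    apply rootFn_eq_of_reach hF''.1 hF''.2.1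
      (a := Nat.find (h2 (π x)))
    · show (fun y => π (q (π y)))^[Nat.find (h2 (π x))] x = π (rootFn q h2 (π x))
      rw [conj_iterate π hπinv q _ x]
      rfl
    · rw [hπlt]
      exact rootFn_lt h2 (π x)
  apply Nat.card_congr
  refine Equiv.subtypeEquiv π ?_
  intro x
  rw [hconjroot x]
  constructor
  · intro h
    have := congrArg π h
    rw [hπinv] at this
    rw [this]
    show π ρ = j
    rw [hπdef, Equiv.swap_apply_right]
  · intro h
    rw [h]
    show π j = ρ
    rw [hπdef, Equiv.swap_apply_left]

lemma tree_partition {q : Fin n → Fin n} {t : Fin n → Fin k}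
    (hF : IsKAryPlaneForest n k (r + 1) q t) :
    ∑ j : Fin (r + 1),
      Nat.card {x : Fin n // rootFn q hF.2.1 x = Fin.castLE hr (j : Fin (r + 1))} = n := by
  classical
  set rfn : Fin n → Fin (r + 1) := fun x => ⟨(rootFn q hF.2.1 x).val, rootFn_lt hF.2.1 x⟩
    with hrfn
  have hiff : ∀ (j : Fin (r + 1)) (x : Fin n),
      rootFn q hF.2.1 x = Fin.castLE hr j ↔ rfn x = j := by
    intro j x
    constructor
    · intro h; apply Fin.ext; simpa [hrfn] using congrArg Fin.val h
    · intro h; apply Fin.ext; simpa [hrfn] using congrArg Fin.val h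
  haveI : ∀ j : Fin (r + 1), Fintype {x : Fin n // rfn x = j} := fun _ => Fintype.ofFinite _
  have e1 : ∀ j : Fin (r + 1),
      Nat.card {x : Fin n // rootFn q hF.2.1 x = Fin.castLE hr j} =
        Nat.card {x : Fin n // rfn x = j} := by
    intro j
    exact Nat.card_congr (Equiv.subtypeEquivRight (hiff j))
  calc ∑ j : Fin (r + 1), Nat.card {x : Fin n // rootFn q hF.2.1 x = Fin.castLE hr j}
      = ∑ j : Fin (r + 1), Nat.card {x : Fin n // rfn x = j} :=
        Finset.sum_congr rfl fun j _ => e1 j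
    _ = Nat.card (Σ j : Fin (r + 1), {x : Fin n // rfn x = j}) := by
        rw [Nat.card_eq_fintype_card, Fintype.card_sigma]
        simp [Nat.card_eq_fintype_card]
    _ = Nat.card (Fin n) := Nat.card_congr (Equiv.sigmaFiberEquiv rfn)
    _ = n := Nat.card_eq_fintype_card.trans (Fintype.card_fin n)

lemma sum_tree_card :
    (r + 1) * ∑ F' : Forest n k (r + 1),
        Nat.card {x : Fin n // rootFn F'.1.1 F'.2.2.1 x = ⟨r, hr⟩} =
      n * Nat.card (Forest n k (r + 1)) := by
  classical
  have key : ∀ j : Fin (r + 1),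
      (∑ F' : Forest n k (r + 1),
        Nat.card {x : Fin n // rootFn F'.1.1 F'.2.2.1 x = Fin.castLE hr j}) =
      ∑ F' : Forest n k (r + 1),
        Nat.card {x : Fin n // rootFn F'.1.1 F'.2.2.1 x = ⟨r, hr⟩} := by
    intro j
    have hj : (Fin.castLE hr j : Fin n).val < r + 1 := by
      simpa using j.isLt
    calc (∑ F' : Forest n k (r + 1),
          Nat.card {x : Fin n // rootFn F'.1.1 F'.2.2.1 x = Fin.castLE hr j})
        = ∑ F' : Forest n k (r + 1),
            Nat.card {x : Fin n //
              rootFn (swapF hr (Fin.castLE hr j) hj F').1.1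
                (swapF hr (Fin.castLE hr j) hj F').2.2.1 x = ⟨r, hr⟩} :=
          Finset.sum_congr rfl fun F' _ => (swap_tree_card hr _ hj F').symm
      _ = _ := Equiv.sum_comp (swapF hr (Fin.castLE hr j) hj)
            (fun F' : Forest n k (r + 1) =>
              Nat.card {x : Fin n // rootFn F'.1.1 F'.2.2.1 x = ⟨r, hr⟩})
  calc (r + 1) * ∑ F' : Forest n k (r + 1),
        Nat.card {x : Fin n // rootFn F'.1.1 F'.2.2.1 x = ⟨r, hr⟩}
      = ∑ _j : Fin (r + 1), ∑ F' : Forest n k (r + 1),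
          Nat.card {x : Fin n // rootFn F'.1.1 F'.2.2.1 x = ⟨r, hr⟩} := by
        rw [Finset.sum_const, Finset.card_univ, Fintype.card_fin, smul_eq_mul]
    _ = ∑ j : Fin (r + 1), ∑ F' : Forest n k (r + 1),
          Nat.card {x : Fin n // rootFn F'.1.1 F'.2.2.1 x = Fin.castLE hr j} :=
        (Finset.sum_congr rfl fun j _ => (key j).symm)
    _ = ∑ F' : Forest n k (r + 1), ∑ j : Fin (r + 1),
          Nat.card {x : Fin n // rootFn F'.1.1 F'.2.2.1 x = Fin.castLE hr j} :=
        Finset.sum_comm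
    _ = ∑ _F' : Forest n k (r + 1), n :=
        Finset.sum_congr rfl fun F' _ => tree_partition hr F'.2
    _ = n * Nat.card (Forest n k (r + 1)) := by
        rw [Finset.sum_const, Finset.card_univ, smul_eq_mul, Nat.card_eq_fintype_card,
          mul_comm]

end Swap


/-! ### the main induction -/

lemma main_count (n k : ℕ) (hk : 1 ≤ k) :
    ∀ d r : ℕ, 1 ≤ r → r + d = n →
      n * Nat.card (Forest n k r) = r * Nat.descFactorial (k * n) d := by
  intro d
  induction d with
  | zero =>
    intro r hr1 hrd
    have : r = n := by omega
    subst this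
    rw [card_forest_self hk (by omega), Nat.descFactorial_zero]
  | succ d ih =>
    intro r hr1 hrd
    have hr : r < n := by omega
    have ih' := ih (r + 1) (by omega) (by omega)
    classical
    set F := Nat.card (Forest n k (r + 1)) with hF
    set D := Nat.descFactorial (k * n) d with hD
    set M := ∑ F' : Forest n k (r + 1),
      Nat.card {x : Fin n // rootFn F'.1.1 F'.2.2.1 x = ⟨r, hr⟩} with hM
    set U := ∑ F' : Forest n k (r + 1),
      Nat.card {w : Fin n // F'.1.1 w ≠ w ∧ rootFn F'.1.1 F'.2.2.1 w ≠ ⟨r, hr⟩} with hU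
    set V := Nat.card (Forest n k r) with hV
    -- identity (1)
    have h1 : V + k * M + U = k * n * F := by
      have hsum : ∑ F' : Forest n k (r + 1),
          (Nat.card {vs : Fin n × Fin k // ValidPair r hr F'.1.1 F'.1.2 vs}
            + k * Nat.card {x : Fin n // rootFn F'.1.1 F'.2.2.1 x = ⟨r, hr⟩}
            + Nat.card {w : Fin n // F'.1.1 w ≠ w ∧ rootFn F'.1.1 F'.2.2.1 w ≠ ⟨r, hr⟩})
          = ∑ _F' : Forest n k (r + 1), k * n :=
        Finset.sum_congr rfl fun F' _ => count_valid F'.2 hr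
      rw [Finset.sum_add_distrib, Finset.sum_add_distrib, ← Finset.mul_sum,
        Finset.sum_const, Finset.card_univ, smul_eq_mul] at hsum
      rw [hV, card_forest_eq_sum hk hr, hM, hU, hF, Nat.card_eq_fintype_card]
      rw [hsum]
      ring
    -- identity (2)
    have h2 : M + U + r * F = n * F := by
      have hsum : ∑ F' : Forest n k (r + 1),
          (Nat.card {x : Fin n // rootFn F'.1.1 F'.2.2.1 x = ⟨r, hr⟩}
            + Nat.card {w : Fin n // F'.1.1 w ≠ w ∧ rootFn F'.1.1 F'.2.2.1 w ≠ ⟨r, hr⟩}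
            + r)
          = ∑ _F' : Forest n k (r + 1), n :=
        Finset.sum_congr rfl fun F' _ => count_split F'.2 hr
      rw [Finset.sum_add_distrib, Finset.sum_add_distrib, Finset.sum_const,
        Finset.sum_const, Finset.card_univ, smul_eq_mul, smul_eq_mul] at hsum
      rw [hM, hU, hF, Nat.card_eq_fintype_card]
      rw [mul_comm (Fintype.card (Forest n k (r + 1))) r] at hsum
      rw [hsum]
      ring
    -- identity (3): M = D
    have h3 : M = D := by
      have hst := sum_tree_card (n := n) (k := k) (r := r) hr
      rw [← hM, ← hF] at hst
      rw [ih'] at hst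
      exact Nat.eq_of_mul_eq_mul_left (by omega) hst
    -- identity (4)
    have h4 : n * F = (r + 1) * D := ih'
    -- E
    have hkn : n ≤ k * n := Nat.le_mul_of_pos_left n (by omega)
    set E := k * n - d with hE'
    have hE : E + d = k * n := by omega
    -- goal
    rw [Nat.descFactorial_succ, ← hD, ← hE']
    -- cast to ℤ
    have h1' : (V : ℤ) + k * M + U = k * n * F := by exact_mod_cast h1
    have h2' : (M : ℤ) + U + r * F = n * F := by exact_mod_cast h2
    have h3' : (M : ℤ) = D := by exact_mod_cast h3
    have h4' : (n : ℤ) * F = (r + 1) * D := by exact_mod_cast h4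
    have hEz : (E : ℤ) + d = k * n := by exact_mod_cast hE
    have hdz : (r : ℤ) + (d + 1) = n := by exact_mod_cast hrd
    have goal' : (n : ℤ) * V = r * (E * D) := by
      linear_combination (n : ℤ) * h1' - n * h2' + (n - n * k) * h3'
        + (k * n + r - n) * h4' - r * D * hEz + r * D * hdz
    exact_mod_cast goal'

end KAryAux


open KAryAux in
theorem card_kary_plane_forests (n k r : ℕ) (hk : 1 ≤ k) (hr : 1 ≤ r) (hrn : r ≤ n) :
    (Nat.card {ps : (Fin n → Fin n) × (Fin n → Fin k) //
        IsKAryPlaneForest n k r ps.1 ps.2} : ℚ) =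
      (r / n) * Nat.choose (k * n) (n - r) * (n - r).factorial := by
  have hmain := main_count n k hk (n - r) r hr (by omega)
  have hn : 0 < n := by omega
  rw [Nat.descFactorial_eq_factorial_mul_choose] at hmain
  have hq : (n : ℚ) * Nat.card (Forest n k r) =
      r * ((n - r).factorial * Nat.choose (k * n) (n - r)) := by exact_mod_cast hmain
  have hne : (n : ℚ) ≠ 0 := by positivity
  rw [div_mul_eq_mul_div, div_mul_eq_mul_div, eq_div_iff hne]
  show (Nat.card (Forest n k r) : ℚ) * n = _
  linear_combination hq
end

section
/- For integers k ≥ 1, p, q ≥ 1 and n ≥ p+q, the identity ∑_{i=p}^{n−q} (pq/(i(n−i))) · C(ki, i−p) · C(k(n−i), n−i−q) = ((p+q)/n) · C(kn, n−(p+q)) holds. -/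
open Finset

/-- Raney numbers `r/(km+r) * C(km+r, m)` written subtraction-free. -/
noncomputable def raneyR (k r m : ℕ) : ℚ :=
  if m = 0 then 1
  else (Nat.choose (k * m + r) m : ℚ) - k * Nat.choose (k * m + r - 1) (m - 1)

lemma raneyR_zero (k r : ℕ) : raneyR k r 0 = 1 := by simp [raneyR]

lemma raneyR_r_zero (k m : ℕ) (hk : 1 ≤ k) (hm : m ≠ 0) : raneyR k 0 m = 0 := by
  obtain ⟨m', rfl⟩ : ∃ m', m = m' + 1 := ⟨m - 1, by omega⟩
  simp only [raneyR, if_neg hm, Nat.add_zero, Nat.add_sub_cancel]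
  have hK : 1 ≤ k * (m' + 1) :=
    Nat.one_le_iff_ne_zero.mpr (Nat.mul_ne_zero (by omega) (by omega))
  have key := Nat.add_one_mul_choose_eq (k * (m' + 1) - 1) m'
  rw [Nat.sub_add_cancel hK] at key
  have keyQ : ((k * (m' + 1) : ℕ) : ℚ) * Nat.choose (k * (m' + 1) - 1) m'
      = Nat.choose (k * (m' + 1)) (m' + 1) * (m' + 1) := by exact_mod_cast key
  push_cast at keyQ
  have hm1 : ((m' : ℚ) + 1) ≠ 0 := by positivity
  have hz : ((m' : ℚ) + 1) *
      ((Nat.choose (k * (m' + 1)) (m' + 1) : ℚ) - k * Nat.choose (k * (m' + 1) - 1) m') = 0 := by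
    linear_combination -keyQ
  have := mul_eq_zero.mp hz
  tauto

lemma raneyR_rec (k r m : ℕ) (hk : 1 ≤ k) (hr : 1 ≤ r) (hm : 1 ≤ m) :
    raneyR k r m = raneyR k (r - 1) m + raneyR k (r + k - 1) (m - 1) := by
  obtain ⟨m', rfl⟩ : ∃ m', m = m' + 1 := ⟨m - 1, by omega⟩
  obtain ⟨r', rfl⟩ : ∃ r', r = r' + 1 := ⟨r - 1, by omega⟩
  rcases Nat.eq_zero_or_pos m' with rfl | hm'
  · norm_num [raneyR, Nat.choose_one_right]
  · obtain ⟨b, rfl⟩ : ∃ b, m' = b + 1 := ⟨m' - 1, by omega⟩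
    have hne : b + 1 + 1 ≠ 0 := by omega
    have hne' : b + 1 ≠ 0 := by omega
    simp only [raneyR, if_neg hne, if_neg hne', Nat.add_sub_cancel]
    rw [show k * (b + 1 + 1) = k * (b + 1) + k from by ring]
    have hc1 : 1 ≤ k * (b + 1) :=
      Nat.one_le_iff_ne_zero.mpr (Nat.mul_ne_zero (by omega) (by omega))
    set c := k * (b + 1) with hc
    set a := c + k + r' - 1 with ha
    rw [show c + k + (r' + 1) = a + 2 from by omega]
    rw [show a + 2 - 1 = a + 1 from by omega,
        show c + k + r' = a + 1 from by omega,
        show c + (r' + 1 + k - 1) - 1 = a from by omega,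
        show c + (r' + 1 + k - 1) = a + 1 from by omega]
    rw [show a + 2 = (a + 1) + 1 from rfl, show b + 2 = (b + 1) + 1 from rfl,
        Nat.choose_succ_succ (a + 1) (b + 1), Nat.choose_succ_succ a b]
    push_cast
    ring

lemma raneyR_conv (k : ℕ) (hk : 1 ≤ k) (m : ℕ) :
    ∀ r s, ∑ j ∈ range (m + 1), raneyR k r j * raneyR k s (m - j) = raneyR k (r + s) m := by
  induction m using Nat.strong_induction_on with
  | _ m ih =>
    intro r s
    induction s with
    | zero =>
      rw [Finset.sum_eq_single_of_mem m (self_mem_range_succ m)]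
      · simp [raneyR_zero]
      · intro j hj hjm
        rw [mem_range] at hj
        rw [raneyR_r_zero k _ hk (by omega), mul_zero]
    | succ s ihs =>
      rcases Nat.eq_zero_or_pos m with rfl | hm
      · simp [raneyR_zero]
      · rw [Finset.sum_range_succ]
        have hsplit : ∀ j ∈ range m, raneyR k r j * raneyR k (s + 1) (m - j)
            = raneyR k r j * raneyR k s (m - j) + raneyR k r j * raneyR k (s + k) (m - 1 - j) := by
          intro j hj
          rw [mem_range] at hj
          rw [raneyR_rec k (s + 1) (m - j) hk (by omega) (by omega),
              show s + 1 - 1 = s from rfl, show s + 1 + k - 1 = s + k from by omega,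
              show m - j - 1 = m - 1 - j from by omega]
          ring
        rw [Finset.sum_congr rfl hsplit, Finset.sum_add_distrib]
        have hA : ∑ j ∈ range m, raneyR k r j * raneyR k s (m - j)
            = raneyR k (r + s) m - raneyR k r m := by
          have h := ihs
          rw [Finset.sum_range_succ, Nat.sub_self, raneyR_zero, mul_one] at h
          linarith
        have hB : ∑ j ∈ range m, raneyR k r j * raneyR k (s + k) (m - 1 - j)
            = raneyR k (r + s + k) (m - 1) := by
          have h := ih (m - 1) (by omega) r (s + k)
          rw [show m - 1 + 1 = m from by omega] at h
          rw [h]; congr 1; omega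
        rw [hA, hB, Nat.sub_self, raneyR_zero, mul_one,
            raneyR_rec k (r + (s + 1)) m hk (by omega) hm,
            show r + (s + 1) - 1 = r + s from by omega,
            show r + (s + 1) + k - 1 = r + s + k from by omega]
        ring

lemma raneyR_bridge (k p i : ℕ) (hk : 1 ≤ k) (hp : 1 ≤ p) (hpi : p ≤ i) :
    (p : ℚ) / i * Nat.choose (k * i) (i - p) = raneyR k (k * p) (i - p) := by
  have hi0 : (i : ℚ) ≠ 0 := Nat.cast_ne_zero.mpr (by omega)
  rcases Nat.eq_or_lt_of_le hpi with rfl | hlt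
  · rw [Nat.sub_self, raneyR_zero, Nat.choose_zero_right]
    push_cast
    field_simp
  · set m := i - p with hmdef
    have hm1 : 1 ≤ m := by omega
    have hmp : m + p = i := by omega
    rw [raneyR, if_neg (by omega)]
    rw [show k * m + k * p = k * i from by rw [← Nat.mul_add, hmp]]
    have hki : 1 ≤ k * i := Nat.one_le_iff_ne_zero.mpr (Nat.mul_ne_zero (by omega) (by omega))
    have key := Nat.add_one_mul_choose_eq (k * i - 1) (m - 1)
    rw [Nat.sub_add_cancel hki, Nat.sub_add_cancel hm1] at key
    have keyQ : ((k * i : ℕ) : ℚ) * Nat.choose (k * i - 1) (m - 1)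
        = Nat.choose (k * i) m * m := by exact_mod_cast key
    push_cast at keyQ
    have hpm : (p : ℚ) = (i : ℚ) - m := by
      have : ((m : ℚ) + p) = i := by exact_mod_cast hmp
      push_cast at this
      linarith
    field_simp
    linear_combination keyQ + (Nat.choose (k * i) m : ℚ) * hpm

theorem kary_forest_identity (k p q n : ℕ) (hk : 1 ≤ k) (hp : 1 ≤ p) (hq : 1 ≤ q)
    (hn : p + q ≤ n) :
    ∑ i ∈ Finset.Icc p (n - q),
        ((p * q : ℚ) / (i * (n - i))) * Nat.choose (k * i) (i - p) *
          Nat.choose (k * (n - i)) (n - i - q) =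
      ((p + q : ℚ) / n) * Nat.choose (k * n) (n - (p + q)) := by
  have hstep : ∀ i ∈ Finset.Icc p (n - q),
      ((p * q : ℚ) / (i * (n - i))) * Nat.choose (k * i) (i - p) *
          Nat.choose (k * (n - i)) (n - i - q)
        = raneyR k (k * p) (i - p) * raneyR k (k * q) (n - i - q) := by
    intro i hi
    rw [Finset.mem_Icc] at hi
    obtain ⟨hpi, hiq⟩ := hi
    have hin : i ≤ n := by omega
    have hqni : q ≤ n - i := by omega
    rw [← raneyR_bridge k p i hk hp hpi, ← raneyR_bridge k q (n - i) hk hq hqni,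
        show ((n : ℚ) - i) = ((n - i : ℕ) : ℚ) from by rw [Nat.cast_sub hin]]
    have h1 : (i : ℚ) ≠ 0 := Nat.cast_ne_zero.mpr (by omega)
    have h2 : ((n - i : ℕ) : ℚ) ≠ 0 := Nat.cast_ne_zero.mpr (by omega)
    field_simp
  have hIcc : Finset.Icc p (n - q) = (Finset.range (n - p - q + 1)).map (addLeftEmbedding p) := by
    rw [← Nat.Ico_zero_eq_range, Finset.Ico_add_one_right_eq_Icc, Finset.map_add_left_Icc]
    congr 1
    omega
  rw [Finset.sum_congr rfl hstep, hIcc, Finset.sum_map]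
  simp only [addLeftEmbedding_apply]
  have hterm : ∀ j ∈ range (n - p - q + 1),
      raneyR k (k * p) (p + j - p) * raneyR k (k * q) (n - (p + j) - q)
        = raneyR k (k * p) j * raneyR k (k * q) ((n - p - q) - j) := by
    intro j hj
    rw [mem_range] at hj
    congr 2 <;> omega
  rw [Finset.sum_congr rfl hterm, raneyR_conv k hk (n - p - q) (k * p) (k * q),
      show k * p + k * q = k * (p + q) from by ring,
      show n - p - q = n - (p + q) from by omega,
      ← raneyR_bridge k (p + q) n hk (by omega) hn]
  push_cast
  ring
end

section
/- For 1 ≤ p ≤ n, the number of unlabeled plane trees on n+1 vertices having exactly p leaves equals (1/(n+1)) · C(n+1, p) · C(n−1, n−p) (the Narayana number). -/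
/-!
A plane tree is encoded by its Łukasiewicz word, the preorder list of out-degrees. This is a
bijection onto the words `w` with `w.sum + 1 = w.length` whose proper prefixes satisfy
`j ≤ (w.take j).sum`, and it sends vertices to letters and leaves to zeros. By the cycle lemma,
every word of length `n + 1` and sum `n` has exactly one such rotation, and the `n + 1` rotations
of such a word are distinct; so `n + 1` times the number of trees is the number of words of
length `n + 1` and sum `n` with `p` zeros. Such a word is a choice of the `p` positions of its
zeros together with a composition of `n` into `n + 1 - p` positive parts, which gives
`C(n + 1, p) * C(n - 1, n - p)`.
-/

/-- A (finite, unlabeled) plane tree: a root together with a linearly ordered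
list of subtrees. -/
inductive PlaneTree : Type
  | node : List PlaneTree → PlaneTree

/-- The number of vertices of a plane tree. -/
def PlaneTree.size : PlaneTree → ℕ
  | .node ts => 1 + (ts.attach.map fun t => PlaneTree.size t.1).sum
decreasing_by have := List.sizeOf_lt_of_mem t.2; simp at this ⊢; omega

/-- The number of leaves (vertices with no children) of a plane tree. -/
def PlaneTree.leaves : PlaneTree → ℕ
  | .node [] => 1
  | .node (t :: ts) => (((t :: ts).attach).map fun s => PlaneTree.leaves s.1).sum
decreasing_by have := List.sizeOf_lt_of_mem s.2; simp at this ⊢; omega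

namespace List

/-- `w` is the preorder degree list of a forest of `k` trees: starting with `k` pending trees,
each letter `c` consumes the root of a pending tree and leaves its `c` subtrees pending, and
nothing is pending exactly at the end. -/
def IsLukasiewicz : ℕ → List ℕ → Prop
  | k, [] => k = 0
  | k, c :: w => 0 < k ∧ IsLukasiewicz (k - 1 + c) w

@[simp] theorem isLukasiewicz_nil {k : ℕ} : IsLukasiewicz k [] ↔ k = 0 := Iff.rfl

@[simp] theorem isLukasiewicz_cons {k c : ℕ} {w : List ℕ} :
    IsLukasiewicz k (c :: w) ↔ 0 < k ∧ IsLukasiewicz (k - 1 + c) w := Iff.rfl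

theorem IsLukasiewicz.append {k k' : ℕ} {w w' : List ℕ} (h : IsLukasiewicz k w)
    (h' : IsLukasiewicz k' w') : IsLukasiewicz (k + k') (w ++ w') := by
  induction w generalizing k with
  | nil => simp_all
  | cons c w ih =>
    obtain ⟨hk, hw⟩ := h
    rw [cons_append, isLukasiewicz_cons, show k + k' - 1 + c = k - 1 + c + k' by omega]
    exact ⟨by omega, ih hw⟩

theorem isLukasiewicz_iff {k : ℕ} {w : List ℕ} :
    IsLukasiewicz k w ↔ w.sum + k = w.length ∧ ∀ j < w.length, j < (w.take j).sum + k := by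
  induction w generalizing k with
  | nil => simp
  | cons c w ih =>
    simp only [isLukasiewicz_cons, ih, sum_cons, length_cons, Nat.forall_lt_succ_left,
      take_zero, sum_nil, zero_add, take_succ_cons]
    constructor
    · rintro ⟨hk, hs, hj⟩
      exact ⟨by omega, hk, fun j hj' => by have := hj j hj'; omega⟩
    · rintro ⟨hs, hk, hj⟩
      exact ⟨hk, by omega, fun j hj' => by have := hj j hj'; omega⟩

end List

namespace PlaneTree

open List

theorem size_node (ts : List PlaneTree) : (node ts).size = 1 + (ts.map size).sum := by
  rw [size, attach_map_val (f := size)]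

theorem leaves_node_nil : (node []).leaves = 1 := by
  rw [leaves]

theorem leaves_node_cons (t : PlaneTree) (ts : List PlaneTree) :
    (node (t :: ts)).leaves = ((t :: ts).map leaves).sum := by
  rw [leaves, attach_map_val (f := leaves)]

def lukasiewicz : List PlaneTree → List ℕ
  | [] => []
  | node cs :: ts => cs.length :: (lukasiewicz cs ++ lukasiewicz ts)

theorem lukasiewicz_append (ts ts' : List PlaneTree) :
    lukasiewicz (ts ++ ts') = lukasiewicz ts ++ lukasiewicz ts' := by
  induction ts with
  | nil => simp [lukasiewicz]
  | cons t ts ih =>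
    obtain ⟨cs⟩ := t
    simp [lukasiewicz, ih]

theorem length_lukasiewicz (ts : List PlaneTree) :
    (lukasiewicz ts).length = (ts.map size).sum := by
  induction ts using lukasiewicz.induct with
  | case1 => simp [lukasiewicz]
  | case2 cs ts ih ih' =>
    simp only [lukasiewicz, length_cons, length_append, ih, ih', map_cons, sum_cons, size_node]
    omega

theorem count_zero_lukasiewicz (ts : List PlaneTree) :
    (lukasiewicz ts).count 0 = (ts.map leaves).sum := by
  induction ts using lukasiewicz.induct with
  | case1 => simp [lukasiewicz]
  | case2 cs ts ih ih' =>
    cases cs with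
    | nil => simp [lukasiewicz, ih', leaves_node_nil, add_comm]
    | cons c cs => simp [lukasiewicz, ih, ih', leaves_node_cons]

theorem isLukasiewicz_lukasiewicz (ts : List PlaneTree) :
    IsLukasiewicz ts.length (lukasiewicz ts) := by
  induction ts using lukasiewicz.induct with
  | case1 => simp [lukasiewicz]
  | case2 cs ts ih ih' =>
    simpa [lukasiewicz, add_comm] using ih.append ih'

def graft (c : ℕ) (ts : List PlaneTree) : List PlaneTree :=
  node (ts.take c) :: ts.drop c

def ofLukasiewicz (w : List ℕ) : List PlaneTree :=
  w.foldr graft []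

theorem foldr_graft_lukasiewicz (ts acc : List PlaneTree) :
    (lukasiewicz ts).foldr graft acc = ts ++ acc := by
  induction ts using lukasiewicz.induct generalizing acc with
  | case1 => simp [lukasiewicz]
  | case2 cs ts ih ih' =>
    simp [lukasiewicz, foldr_append, ih, ih', graft]

theorem ofLukasiewicz_lukasiewicz (ts : List PlaneTree) :
    ofLukasiewicz (lukasiewicz ts) = ts := by
  simpa [ofLukasiewicz] using foldr_graft_lukasiewicz ts []

theorem _root_.List.IsLukasiewicz.lukasiewicz_ofLukasiewicz {k : ℕ} {w : List ℕ}
    (h : IsLukasiewicz k w) :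
    (ofLukasiewicz w).length = k ∧ lukasiewicz (ofLukasiewicz w) = w := by
  induction w generalizing k with
  | nil => simp_all [ofLukasiewicz, lukasiewicz]
  | cons c w ih =>
    obtain ⟨hk, hw⟩ := h
    obtain ⟨hlen, henc⟩ := ih hw
    change (graft c (ofLukasiewicz w)).length = k ∧ lukasiewicz (graft c (ofLukasiewicz w)) = _
    refine ⟨by simp [graft]; omega, ?_⟩
    rw [graft, lukasiewicz, ← lukasiewicz_append, take_append_drop, henc, length_take, hlen,
      min_eq_left (by omega)]

def equivLukasiewicz : PlaneTree ≃ {w : List ℕ // IsLukasiewicz 1 w} where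
  toFun t := ⟨lukasiewicz [t], isLukasiewicz_lukasiewicz [t]⟩
  invFun w := (ofLukasiewicz w).headD (node [])
  left_inv t := by simp [ofLukasiewicz_lukasiewicz]
  right_inv := by
    rintro ⟨w, hw⟩
    obtain ⟨hlen, henc⟩ := hw.lukasiewicz_ofLukasiewicz
    obtain ⟨t, ht⟩ := length_eq_one_iff.mp hlen
    rw [ht] at henc
    simpa [ht] using henc

theorem card_size_leaves_eq (n p : ℕ) :
    Nat.card {t : PlaneTree // t.size = n + 1 ∧ t.leaves = p} =
      Nat.card {w : List ℕ // IsLukasiewicz 1 w ∧ w.length = n + 1 ∧ w.count 0 = p} := by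
  refine Nat.card_congr ((equivLukasiewicz.subtypeEquiv fun t => ?_).trans
    (Equiv.subtypeSubtypeEquivSubtypeInter _ (fun w : List ℕ => w.length = n + 1 ∧ w.count 0 = p)))
  simp [equivLukasiewicz, length_lukasiewicz, count_zero_lukasiewicz]

end PlaneTree

namespace List

theorem sum_take_rotate {M : Type*} [AddCommMonoid M] (l : List M) {i j : ℕ}
    (hi : i ≤ l.length) (hj : j ≤ l.length) :
    ((l.rotate i).take j).sum + (l.take i).sum =
      (l.take (i + j)).sum + (l.take (i + j - l.length)).sum := by
  rw [rotate_eq_drop_append_take hi, take_append, sum_append, length_drop]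
  rcases le_or_gt (i + j) l.length with h | h
  · rw [take_add, sum_append, Nat.sub_eq_zero_of_le (by omega), Nat.sub_eq_zero_of_le h]
    simp [add_comm]
  · rw [take_of_length_le (show (drop i l).length ≤ j by simp; omega),
      take_of_length_le (show l.length ≤ i + j by omega), take_take,
      min_eq_left (show j - (l.length - i) ≤ i by omega),
      show j - (l.length - i) = i + j - l.length by omega, ← sum_take_add_sum_drop l i]
    abel

/-- The prefix `w.take i` has sum at least `i`, so the prefix `w.drop i` of the rotation is too
light. -/
theorem IsLukasiewicz.not_isLukasiewicz_rotate {w : List ℕ} {i : ℕ} (hw : IsLukasiewicz 1 w)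
    (hi₀ : 0 < i) (hi : i < w.length) : ¬ IsLukasiewicz 1 (w.rotate i) := by
  rw [isLukasiewicz_iff] at hw ⊢
  rintro ⟨-, hrot⟩
  have hpre := hw.2 i hi
  have hrot' := hrot (w.length - i) (by simp; omega)
  have hsum := sum_take_rotate w (i := i) (j := w.length - i) hi.le (by omega)
  rw [show i + (w.length - i) = w.length by omega, Nat.sub_self, take_length, take_zero,
    sum_nil, add_zero] at hsum
  omega

theorem exists_isLukasiewicz_rotate {w : List ℕ} (hw : w.sum + 1 = w.length) :
    ∃ i < w.length, IsLukasiewicz 1 (w.rotate i) := by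
  -- rotate to the first minimum of `f`; the lexicographic key selects the first one
  set f : ℕ → ℤ := fun j => (w.take j).sum - j with hf
  obtain ⟨i, hi, hmin⟩ := (Finset.range w.length).exists_min_image (fun j => toLex (f j, j))
    ⟨0, by simp; omega⟩
  simp only [Finset.mem_range, Prod.Lex.toLex_le_toLex] at hi hmin
  refine ⟨i, hi, isLukasiewicz_iff.mpr ⟨by simp [(rotate_perm w i).sum_eq]; omega, ?_⟩⟩
  intro j hj
  rw [length_rotate] at hj
  have hsum := sum_take_rotate w (i := i) (j := j) hi.le hj.le
  rcases lt_or_ge (i + j) w.length with h | h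
  · have := hmin (i + j) h
    rw [Nat.sub_eq_zero_of_le h.le] at hsum
    simp only [hf] at this
    simp only [take_zero, sum_nil, add_zero] at hsum
    omega
  · have := hmin (i + j - w.length) (by omega)
    rw [take_of_length_le h] at hsum
    simp only [hf] at this
    omega

theorem IsLukasiewicz.eq_of_rotate_eq {w w' : List ℕ} {i i' : ℕ} (hw : IsLukasiewicz 1 w)
    (hw' : IsLukasiewicz 1 w') (hii' : i ≤ i') (hi' : i' < w'.length)
    (h : w.rotate i = w'.rotate i') : w = w' ∧ i = i' := by
  rw [show i' = i' - i + i by omega, ← rotate_rotate, rotate_eq_rotate] at h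
  subst h
  obtain h₀ | hpos := Nat.eq_zero_or_pos (i' - i)
  · exact ⟨by rw [h₀, rotate_zero], by omega⟩
  · exact absurd hw (hw'.not_isLukasiewicz_rotate hpos (by omega))

theorem card_length_sum_eq_mul_card_isLukasiewicz (n : ℕ) (P : List ℕ → Prop)
    (hP : ∀ l i, P l → P (l.rotate i)) :
    Nat.card {l : List ℕ // l.length = n + 1 ∧ l.sum = n ∧ P l} =
      (n + 1) * Nat.card {w : List ℕ // IsLukasiewicz 1 w ∧ w.length = n + 1 ∧ P w} := by
  let rot : {w : List ℕ // IsLukasiewicz 1 w ∧ w.length = n + 1 ∧ P w} × Fin (n + 1) →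
      {l : List ℕ // l.length = n + 1 ∧ l.sum = n ∧ P l} := fun x =>
    ⟨x.1.1.rotate x.2, by simp [x.1.2.2.1], by
      have := (isLukasiewicz_iff.mp x.1.2.1).1
      have := x.1.2.2.1
      rw [(rotate_perm _ _).sum_eq]; omega, hP _ _ x.1.2.2.2⟩
  have hrot : Function.Bijective rot := by
    constructor
    · rintro ⟨⟨w, hw, hlen, _⟩, i⟩ ⟨⟨w', hw', hlen', _⟩, i'⟩ heq
      have h : w.rotate i = w'.rotate i' := congrArg Subtype.val heq
      rcases le_total (i : ℕ) i' with hii' | hi'i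
      · obtain ⟨rfl, hii⟩ := hw.eq_of_rotate_eq hw' hii' (by omega) h
        simp [Fin.ext hii]
      · obtain ⟨rfl, hii⟩ := hw'.eq_of_rotate_eq hw hi'i (by omega) h.symm
        simp [Fin.ext hii]
    · rintro ⟨l, hlen, hsum, hl⟩
      obtain ⟨i, hi, hw⟩ := exists_isLukasiewicz_rotate (w := l) (by omega)
      refine ⟨⟨⟨l.rotate i, hw, by simp [hlen], hP l i hl⟩,
        ⟨(n + 1 - i) % (n + 1), Nat.mod_lt _ n.succ_pos⟩⟩, Subtype.ext ?_⟩
      change (l.rotate i).rotate ((n + 1 - i) % (n + 1)) = l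
      rw [← length_rotate l i |>.trans hlen, rotate_mod, rotate_rotate, length_rotate,
        Nat.add_sub_cancel' (by omega), rotate_length]
  rw [← Nat.card_congr (Equiv.ofBijective rot hrot), Nat.card_prod, Nat.card_fin, mul_comm]

end List

open Finset

theorem Finset.card_piAntidiag_nat {ι : Type*} [DecidableEq ι] (s : Finset ι) (n : ℕ) :
    #(piAntidiag s n) = (#s).multichoose n := by
  rw [← card_finsuppAntidiag_nat_eq_multichoose, finsuppAntidiag, card_map, card_attach]

theorem Finset.sum_eq_sum_tsub_one_add_card {ι : Type*} (s : Finset ι) (f : ι → ℕ) :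
    ∑ i ∈ s, f i = ∑ i ∈ s, (f i - 1) + #{i ∈ s | f i ≠ 0} := by
  rw [card_filter, ← sum_add_distrib]
  exact sum_congr rfl fun i _ => by split_ifs <;> omega

section

variable {ι : Type*} [Fintype ι] [DecidableEq ι]

theorem sum_eq_sum_compl_tsub_one_add_card {f : ι → ℕ} {Z : Finset ι}
    (hf : ({i | f i = 0} : Finset ι) = Z) : ∑ i, f i = ∑ i ∈ Zᶜ, (f i - 1) + #Zᶜ := by
  have hZ : ({i | f i ≠ 0} : Finset ι) = Zᶜ := by rw [← hf, filter_not, compl_eq_univ_sdiff]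
  have hvanish : ∀ i ∈ univ, i ∉ Zᶜ → f i - 1 = 0 := fun i _ hi => by
    rw [notMem_compl, ← hf, mem_filter] at hi
    rw [hi.2]
  rw [sum_eq_sum_tsub_one_add_card, hZ, ← sum_subset (subset_univ Zᶜ) hvanish]

theorem card_piAntidiag_filter_zeroSet_eq {n : ℕ} (Z : Finset ι) (hZ : #Zᶜ ≤ n) :
    #{f ∈ piAntidiag univ n | ({i | f i = 0} : Finset ι) = Z} = (#Zᶜ).multichoose (n - #Zᶜ) := by
  have mem_iff {f : ι → ℕ} (hf : ({i | f i = 0} : Finset ι) = Z) (i : ι) : i ∈ Z ↔ f i = 0 := by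
    rw [← hf]; simp
  rw [← card_piAntidiag_nat]
  refine card_nbij' (fun f i => f i - 1) (fun g i => if i ∈ Z then 0 else g i + 1)
    ?_ ?_ ?_ ?_
  · intro f hf
    simp only [mem_coe, mem_filter, mem_piAntidiag, mem_univ, implies_true, and_true] at hf ⊢
    obtain ⟨hsum, hZf⟩ := hf
    have := (sum_eq_sum_compl_tsub_one_add_card hZf).symm.trans hsum
    refine ⟨by omega, fun i hi => ?_⟩
    rw [mem_compl, mem_iff hZf]
    omega
  · intro g hg
    simp only [mem_coe, mem_filter, mem_piAntidiag, mem_univ, implies_true, and_true] at hg ⊢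
    have hZg : ({i | (if i ∈ Z then 0 else g i + 1) = 0} : Finset ι) = Z := by
      ext i
      by_cases hi : i ∈ Z <;> simp [hi]
    refine ⟨?_, hZg⟩
    rw [sum_eq_sum_compl_tsub_one_add_card hZg,
      sum_congr rfl fun i hi => by rw [if_neg (mem_compl.mp hi), Nat.add_sub_cancel], hg.1]
    omega
  · intro f hf
    simp only [mem_coe, mem_filter] at hf
    funext i
    dsimp only
    split_ifs with hi
    · exact ((mem_iff hf.2 i).1 hi).symm
    · exact Nat.sub_add_cancel (Nat.pos_of_ne_zero ((mem_iff hf.2 i).not.1 hi))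
  · intro g hg
    simp only [mem_coe, mem_piAntidiag, mem_compl] at hg
    funext i
    dsimp only
    split_ifs with hi
    · by_contra h
      exact hg.2 i (Ne.symm h) hi
    · rfl

theorem card_piAntidiag_filter_card_zeroSet_eq {n p : ℕ} (h : Fintype.card ι - p ≤ n) :
    #{f ∈ piAntidiag (univ : Finset ι) n | #{i | f i = 0} = p} =
      (Fintype.card ι).choose p * (Fintype.card ι - p).multichoose (n - (Fintype.card ι - p)) := by
  rw [card_eq_sum_card_fiberwise (t := powersetCard p univ)
    (f := fun f => ({i | f i = 0} : Finset ι)) fun f hf => by simp_all]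
  rw [sum_congr rfl fun Z hZ => ?_, sum_const, card_powersetCard, card_univ, smul_eq_mul]
  rw [mem_powersetCard_univ] at hZ
  rw [filter_filter, filter_congr fun f _ => and_iff_right_of_imp fun hf => hf ▸ hZ,
    card_piAntidiag_filter_zeroSet_eq Z (by rwa [card_compl, hZ]), card_compl, hZ]

end

theorem Nat.card_list_length_eq {α : Type*} (m : ℕ) (Q : List α → Prop) :
    Nat.card {l : List α // l.length = m ∧ Q l} = Nat.card {f : Fin m → α // Q (List.ofFn f)} :=
  Nat.card_congr <| (Equiv.subtypeSubtypeEquivSubtypeInter _ Q).symm.trans <|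
    (Equiv.vectorEquivFin α m).subtypeEquiv fun v => by
      rw [Equiv.vectorEquivFin, Equiv.coe_fn_mk, ← List.Vector.toList_ofFn, List.Vector.ofFn_get]
      rfl

theorem List.count_ofFn {α : Type*} [DecidableEq α] {m : ℕ} (f : Fin m → α) (a : α) :
    (List.ofFn f).count a = #{i | f i = a} := by
  rw [← Multiset.coe_count, ← Fin.univ_val_map, Multiset.count_map, Finset.card_def,
    Finset.filter_val]
  simp only [eq_comm]

theorem card_list_length_sum_count_zero {m s p : ℕ} (h : m - p ≤ s) :
    Nat.card {l : List ℕ // l.length = m ∧ l.sum = s ∧ l.count 0 = p} =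
      m.choose p * (m - p).multichoose (s - (m - p)) := by
  have hcard := card_piAntidiag_filter_card_zeroSet_eq (ι := Fin m) (n := s) (p := p)
    (by rwa [Fintype.card_fin])
  rw [Fintype.card_fin] at hcard
  rw [Nat.card_list_length_eq, ← hcard, ← Nat.card_eq_finsetCard]
  exact Nat.card_congr (Equiv.subtypeEquivRight fun f => by
    simp [List.sum_ofFn, List.count_ofFn])

theorem card_unlabeled_plane_trees_with_p_leaves (n p : ℕ) (hp : 1 ≤ p) (hpn : p ≤ n) :
    (Nat.card {t : PlaneTree // t.size = n + 1 ∧ t.leaves = p} : ℚ) =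
      (1 / (n + 1)) * Nat.choose (n + 1) p * Nat.choose (n - 1) (n - p) := by
  have key : (n + 1) * Nat.card {t : PlaneTree // t.size = n + 1 ∧ t.leaves = p} =
      (n + 1).choose p * (n - 1).choose (n - p) := by
    rw [PlaneTree.card_size_leaves_eq, ← List.card_length_sum_eq_mul_card_isLukasiewicz n _
        fun l i h => (l.rotate_perm i).count_eq 0 ▸ h,
      card_list_length_sum_count_zero (by omega), Nat.multichoose_eq,
      show n - (n + 1 - p) = p - 1 by omega, show n + 1 - p + (p - 1) - 1 = n - 1 by omega,
      ← Nat.choose_symm (by omega : p - 1 ≤ n - 1), show n - 1 - (p - 1) = n - p by omega]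
  field_simp
  exact_mod_cast (mul_comm _ _).trans key
end
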